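/- arXiv:1210.5461 — 4 statements merged into one kernel-verified Lean document; each statement's English description precedes it below -/
import Mathlib

section
/- For every matrix F ∈ ℝ^{3×3}, one has |√(FᵀF) − I| ≤ dist(F, SO(3)), where √(FᵀF) denotes the (positive semidefinite) matrix square root of FᵀF, I is the identity matrix, and dist(F, SO(3)) = inf_{R ∈ SO(3)} |F − R| in the Frobenius norm. -/
/-!
Expanding both squared Frobenius norms, `|P - 1|² = tr P² - 2 tr P + 3` and
`|F - R|² = tr FᵀF - 2 tr RᵀF + 3`, so it suffices that `tr RᵀF ≤ tr P` for orthogonal `R`.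
For an orthonormal eigenbasis `uᵢ` of `P` with eigenvalues `λᵢ ≥ 0`, `FᵀF = P²` gives
`|F uᵢ| = λᵢ`, while `|R uᵢ| = 1`; hence `⟪R uᵢ, F uᵢ⟫ ≤ λᵢ` by Cauchy–Schwarz, and summing over
`i` gives `tr RᵀF ≤ tr P`.
-/

open Matrix

noncomputable section

/-- Frobenius norm of a 3×3 real matrix. -/
def frob3 (M : Matrix (Fin 3) (Fin 3) ℝ) : ℝ := Real.sqrt (∑ i, ∑ j, (M i j) ^ 2)

/-- The set of rotations SO(3). -/
def SO3 : Set (Matrix (Fin 3) (Fin 3) ℝ) := {R | Rᵀ * R = 1 ∧ R.det = 1}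

/-- Frobenius distance of a matrix to SO(3). -/
def distSO3 (F : Matrix (Fin 3) (Fin 3) ℝ) : ℝ := sInf ((fun R => frob3 (F - R)) '' SO3)

namespace Matrix

variable {m n : Type*} [Fintype m] [Fintype n]

theorem trace_transpose_mul_le_sum_sqrt (A B : Matrix m n ℝ) :
    trace (Aᵀ * B) ≤ ∑ i, √((Aᵀ * A) i i) * √((Bᵀ * B) i i) := by
  refine Finset.sum_le_sum fun i _ => ?_
  simpa only [diag_apply, mul_apply, transpose_apply, ← sq] using
    Real.sum_mul_le_sqrt_mul_sqrt Finset.univ (fun k => A k i) (fun k => B k i)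

theorem trace_transpose_sub_mul_sub (A B : Matrix m n ℝ) :
    trace ((A - B)ᵀ * (A - B)) = trace (Aᵀ * A) - 2 * trace (Bᵀ * A) + trace (Bᵀ * B) := by
  have hswap : trace (Aᵀ * B) = trace (Bᵀ * A) := by
    rw [← trace_transpose, transpose_mul, transpose_transpose]
  rw [transpose_sub, Matrix.sub_mul, Matrix.mul_sub, Matrix.mul_sub]
  simp only [trace_sub, hswap]
  ring

theorem transpose_mul_self_mul_eq_one {Q U : Matrix n n ℝ} [DecidableEq n]
    (hQ : Qᵀ * Q = 1) (hU : Uᵀ * U = 1) : (Q * U)ᵀ * (Q * U) = 1 := by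
  rw [transpose_mul, mul_assoc, ← mul_assoc Qᵀ, hQ, one_mul, hU]

theorem PosSemidef.trace_transpose_mul_le_trace [DecidableEq n] {F P Q : Matrix n n ℝ}
    (hP : P.PosSemidef) (hsq : P * P = Fᵀ * F) (hQ : Qᵀ * Q = 1) :
    trace (Qᵀ * F) ≤ trace P := by
  set U : Matrix n n ℝ := (hP.1.eigenvectorUnitary : Matrix n n ℝ)
  set D : Matrix n n ℝ := diagonal hP.1.eigenvalues
  have hstar : star U = Uᵀ := by rw [star_eq_conjTranspose, conjTranspose_eq_transpose_of_trivial]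
  have hUU : Uᵀ * U = 1 := hstar ▸ Unitary.coe_star_mul_self hP.1.eigenvectorUnitary
  have hUU' : U * Uᵀ = 1 := mul_eq_one_comm.mp hUU
  have hdiag : Uᵀ * P * U = D := by
    have h := hP.1.conjStarAlgAut_star_eigenvectorUnitary
    rw [Unitary.conjStarAlgAut_star_apply] at h
    simpa [U, D, ← hstar] using h
  have hFU : (F * U)ᵀ * (F * U) = D * D :=
    calc (F * U)ᵀ * (F * U) = Uᵀ * (Fᵀ * F) * U := by
          simp only [transpose_mul, Matrix.mul_assoc]
      _ = Uᵀ * P * (U * Uᵀ) * P * U := by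
        rw [hUU', Matrix.mul_one, ← hsq]; simp only [Matrix.mul_assoc]
      _ = D * D := by rw [← hdiag]; simp only [Matrix.mul_assoc]
  calc trace (Qᵀ * F) = trace ((Q * U)ᵀ * (F * U)) := by
        conv_rhs => rw [transpose_mul, trace_mul_comm, Matrix.mul_assoc, ← Matrix.mul_assoc U,
          hUU', Matrix.one_mul, trace_mul_comm]
    _ ≤ ∑ i, √(((Q * U)ᵀ * (Q * U)) i i) * √(((F * U)ᵀ * (F * U)) i i) :=
        trace_transpose_mul_le_sum_sqrt _ _
    _ = ∑ i, hP.1.eigenvalues i := by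
        simp only [transpose_mul_self_mul_eq_one hQ hUU, hFU, D, diagonal_mul_diagonal,
          one_apply_eq, diagonal_apply_eq, Real.sqrt_one, one_mul,
          Real.sqrt_mul_self (hP.eigenvalues_nonneg _)]
    _ = trace P := by simpa using hP.1.trace_eq_sum_eigenvalues.symm

end Matrix

theorem frob3_eq_sqrt_trace (M : Matrix (Fin 3) (Fin 3) ℝ) : frob3 M = √(trace (Mᵀ * M)) := by
  simp only [frob3, trace, diag_apply, mul_apply, transpose_apply, ← sq]
  rw [Finset.sum_comm]

/-- For every 3×3 matrix F, the positive semidefinite square root of FᵀF satisfies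
`|√(FᵀF) − I| ≤ dist(F, SO(3))` in the Frobenius norm. -/
theorem stmt0 (F P : Matrix (Fin 3) (Fin 3) ℝ) (hP : P.PosSemidef)
    (hsq : P * P = Fᵀ * F) :
    frob3 (P - 1) ≤ distSO3 F := by
  refine le_csInf ⟨_, 1, ⟨by simp, by simp⟩, rfl⟩ ?_
  rintro _ ⟨R, ⟨hR, -⟩, rfl⟩
  have hPt : Pᵀ = P := (isHermitian_iff_isSymm.mp hP.1).eq
  simp only [frob3_eq_sqrt_trace]
  refine Real.sqrt_le_sqrt ?_
  rw [trace_transpose_sub_mul_sub, trace_transpose_sub_mul_sub, hPt, hsq, hR, transpose_one,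
    Matrix.one_mul, Matrix.one_mul]
  linarith [hP.trace_transpose_mul_le_trace hsq hR]

end
end

section
/- Let W : ℝ^{3×3} → [0,∞] be continuous, satisfy W(F) ≥ c₁·dist²(F, SO(3)) for all F, W(F) ≤ c₂·dist²(F, SO(3)) whenever dist²(F, SO(3)) ≤ ρ, and admit a quadratic expansion at the identity: lim_{G→0} (W(I + G) − Q(G))/|G|² = 0 for some quadratic form Q on ℝ^{3×3}. Then c₁ |sym G|² ≤ Q(G) ≤ c₂ |sym G|² for all G ∈ ℝ^{3×3}, where sym G = (G + Gᵀ)/2. -/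
open Matrix Filter Topology

noncomputable section

/-- The symmetric part (G + Gᵀ)/2 of a matrix. -/
def sym3 (G : Matrix (Fin 3) (Fin 3) ℝ) : Matrix (Fin 3) (Fin 3) ℝ := (1 / 2 : ℝ) • (G + Gᵀ)

abbrev M3 := Matrix (Fin 3) (Fin 3) ℝ

section Aux

attribute [local instance] Matrix.frobeniusNormedAddCommGroup Matrix.frobeniusNormedSpace
  Matrix.frobeniusNormedRing Matrix.frobeniusNormedAlgebra

lemma frob3_eq (M : M3) : frob3 M = ‖M‖ := by
  rw [Matrix.frobenius_norm_def, frob3, Real.sqrt_eq_rpow]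
  congr 1
  refine Finset.sum_congr rfl fun i _ => Finset.sum_congr rfl fun j _ => ?_
  rw [Real.norm_eq_abs, Real.rpow_two, sq_abs]

lemma one_mem_SO3 : (1 : M3) ∈ SO3 := by constructor <;> simp

lemma frob3_nonneg (M : M3) : 0 ≤ frob3 M := by rw [frob3_eq]; positivity

lemma frob3_pos (M : M3) (h : M ≠ 0) : 0 < frob3 M := by
  rw [frob3_eq]; exact norm_pos_iff.mpr h

lemma frob3_smul (t : ℝ) (M : M3) : frob3 (t • M) = |t| * frob3 M := by
  rw [frob3_eq, frob3_eq, norm_smul, Real.norm_eq_abs]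

lemma distSO3_le (F R : M3) (hR : R ∈ SO3) : distSO3 F ≤ frob3 (F - R) :=
  csInf_le ⟨0, by rintro x ⟨S, _, rfl⟩; exact frob3_nonneg _⟩ ⟨R, hR, rfl⟩

lemma distSO3_nonneg (F : M3) : 0 ≤ distSO3 F :=
  le_csInf ⟨_, ⟨1, one_mem_SO3, rfl⟩⟩ (by rintro x ⟨S, _, rfl⟩; exact frob3_nonneg _)

lemma distSO3_exists_lt (F : M3) {ε : ℝ} (hε : 0 < ε) :
    ∃ R ∈ SO3, frob3 (F - R) < distSO3 F + ε := by
  obtain ⟨x, ⟨R, hR, rfl⟩, hx⟩ := exists_lt_of_csInf_lt (s := (fun R => frob3 (F - R)) '' SO3)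
    ⟨_, ⟨1, one_mem_SO3, rfl⟩⟩ (lt_add_of_pos_right (distSO3 F) hε)
  exact ⟨R, hR, hx⟩

lemma distSO3_le_id (F : M3) : distSO3 F ≤ frob3 (F - 1) := distSO3_le F 1 one_mem_SO3

lemma sym3_norm_le (M : M3) : ‖sym3 M‖ ≤ ‖M‖ := by
  have h1 : ‖sym3 M‖ ≤ ‖(1/2 : ℝ)‖ * (‖M‖ + ‖Mᵀ‖) := by
    rw [sym3, norm_smul]
    gcongr
    exact norm_add_le _ _
  have h2 : ‖(1/2 : ℝ)‖ = 1/2 := by norm_num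
  rw [h2, Matrix.frobenius_norm_transpose] at h1
  linarith

lemma sym3_smul (t : ℝ) (M : M3) : sym3 (t • M) = t • sym3 M := by
  rw [sym3, sym3, Matrix.transpose_smul, ← smul_add, smul_comm]

lemma sym3_sub (A B : M3) : sym3 (A - B) = sym3 A - sym3 B := by
  simp only [sym3, Matrix.transpose_sub, smul_sub, sub_add_sub_comm]

lemma sym3_transpose (G : M3) : (sym3 G)ᵀ = sym3 G := by
  rw [sym3, Matrix.transpose_smul, Matrix.transpose_add, Matrix.transpose_transpose, add_comm]

lemma skew_transpose (G : M3) : (G - sym3 G)ᵀ = -(G - sym3 G) := by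
  rw [Matrix.transpose_sub, sym3_transpose, sym3]
  ext i j
  simp [Matrix.sub_apply, Matrix.add_apply, Matrix.smul_apply, Matrix.neg_apply,
    Matrix.transpose_apply]
  ring

lemma det_one_sub_skew (B : M3) (hB : Bᵀ = -B) : 0 < (1 - B).det := by
  have h00 : B 0 0 = 0 := by have := congrFun (congrFun hB 0) 0; simp [Matrix.transpose_apply] at this; linarith
  have h11 : B 1 1 = 0 := by have := congrFun (congrFun hB 1) 1; simp [Matrix.transpose_apply] at this; linarith
  have h22 : B 2 2 = 0 := by have := congrFun (congrFun hB 2) 2; simp [Matrix.transpose_apply] at this; linarith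
  have h10 : B 1 0 = -B 0 1 := by have := congrFun (congrFun hB 0) 1; simpa [Matrix.transpose_apply] using this
  have h20 : B 2 0 = -B 0 2 := by have := congrFun (congrFun hB 0) 2; simpa [Matrix.transpose_apply] using this
  have h21 : B 2 1 = -B 1 2 := by have := congrFun (congrFun hB 1) 2; simpa [Matrix.transpose_apply] using this
  rw [Matrix.det_fin_three]
  simp only [Matrix.sub_apply, Matrix.one_apply_eq, Matrix.one_apply_ne (by decide : (0:Fin 3) ≠ 1),
    Matrix.one_apply_ne (by decide : (0:Fin 3) ≠ 2), Matrix.one_apply_ne (by decide : (1:Fin 3) ≠ 0),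
    Matrix.one_apply_ne (by decide : (1:Fin 3) ≠ 2), Matrix.one_apply_ne (by decide : (2:Fin 3) ≠ 0),
    Matrix.one_apply_ne (by decide : (2:Fin 3) ≠ 1), h00, h11, h22, h10, h20, h21]
  nlinarith [sq_nonneg (B 0 1), sq_nonneg (B 0 2), sq_nonneg (B 1 2)]

lemma det_one_add_skew (B : M3) (hB : Bᵀ = -B) : (1 + B).det = (1 - B).det := by
  rw [← Matrix.det_transpose (1 + B), Matrix.transpose_add, Matrix.transpose_one, hB,
    ← sub_eq_add_neg]

lemma cayley_mem_SO3 (B : M3) (hB : Bᵀ = -B) : (1 - B)⁻¹ * (1 + B) ∈ SO3 := by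
  have hdet : IsUnit (1 - B).det := (det_one_sub_skew B hB).ne'.isUnit
  have hdet' : IsUnit (1 + B).det := by rw [det_one_add_skew B hB]; exact hdet
  have htrans : ((1 - B)⁻¹)ᵀ = (1 + B)⁻¹ := by
    rw [Matrix.transpose_nonsing_inv]
    congr 1
    rw [Matrix.transpose_sub, Matrix.transpose_one, hB, sub_neg_eq_add]
  have hcomm : (1 + B) * (1 - B) = (1 - B) * (1 + B) := by noncomm_ring
  constructor
  · have : ((1 - B)⁻¹ * (1 + B))ᵀ = (1 + B)ᵀ * ((1 - B)⁻¹)ᵀ := Matrix.transpose_mul _ _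
    rw [this, htrans, Matrix.transpose_add, Matrix.transpose_one, hB, ← sub_eq_add_neg]
    calc (1 - B) * (1 + B)⁻¹ * ((1 - B)⁻¹ * (1 + B))
        = (1 - B) * ((1 + B)⁻¹ * (1 - B)⁻¹) * (1 + B) := by noncomm_ring
      _ = (1 - B) * ((1 - B) * (1 + B))⁻¹ * (1 + B) := by rw [Matrix.mul_inv_rev]
      _ = (1 - B) * ((1 + B) * (1 - B))⁻¹ * (1 + B) := by rw [hcomm]
      _ = (1 - B) * ((1 - B)⁻¹ * (1 + B)⁻¹) * (1 + B) := by rw [Matrix.mul_inv_rev]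
      _ = ((1 - B) * (1 - B)⁻¹) * ((1 + B)⁻¹ * (1 + B)) := by noncomm_ring
      _ = 1 := by rw [Matrix.mul_nonsing_inv _ hdet, Matrix.nonsing_inv_mul _ hdet', one_mul]
  · rw [Matrix.det_mul, Matrix.det_nonsing_inv, det_one_add_skew B hB,
      Ring.inverse_eq_inv']
    exact inv_mul_cancel₀ (det_one_sub_skew B hB).ne'

lemma norm_one_le : ‖(1 : M3)‖ ≤ 2 := by
  have h1 : frob3 (1 : M3) = Real.sqrt 3 := by
    rw [frob3]
    norm_num [Fin.sum_univ_three, Matrix.one_apply]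
  rw [← frob3_eq, h1]
  calc Real.sqrt 3 ≤ Real.sqrt 4 := Real.sqrt_le_sqrt (by norm_num)
    _ = 2 := by rw [show (4:ℝ) = 2^2 by norm_num, Real.sqrt_sq (by norm_num)]

lemma upper_aux (G : M3) {t : ℝ} (ht : 0 < t) (ht1 : t * (frob3 (G - sym3 G) + 1) ≤ 1) :
    distSO3 (1 + t • G) ≤ t * frob3 (sym3 G) + 2 * t ^ 2 * frob3 (G - sym3 G) ^ 2 := by
  set A := G - sym3 G with hAdef
  have hA : Aᵀ = -A := skew_transpose G
  have ht1' : t * (‖A‖ + 1) ≤ 1 := by rwa [← frob3_eq]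
  set B := (t/2) • A with hBdef
  have hB : Bᵀ = -B := by rw [hBdef, Matrix.transpose_smul, hA, smul_neg]
  have hdet : IsUnit (1 - B).det := (det_one_sub_skew B hB).ne'.isUnit
  set R := (1 - B)⁻¹ * (1 + B) with hRdef
  have hmem : R ∈ SO3 := cayley_mem_SO3 B hB
  have hnB : ‖B‖ = t/2 * ‖A‖ := by
    rw [hBdef, norm_smul, Real.norm_eq_abs, abs_of_pos (by positivity)]
  have hAnn : (0:ℝ) ≤ ‖A‖ := norm_nonneg _
  have hBhalf : ‖B‖ ≤ 1/2 := by rw [hnB]; nlinarith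
  have hI1 : (1 - B)⁻¹ * (1 - B) = 1 := Matrix.nonsing_inv_mul _ hdet
  have hI2 : (1 - B) * (1 - B)⁻¹ = 1 := Matrix.mul_nonsing_inv _ hdet
  have hX : (1 - B)⁻¹ = 1 + (1 - B)⁻¹ * B := by
    calc (1-B)⁻¹ = (1-B)⁻¹ * (1 - B) + (1-B)⁻¹ * B := by noncomm_ring
      _ = 1 + (1-B)⁻¹ * B := by rw [hI1]
  have hinv : ‖(1 - B)⁻¹‖ ≤ 4 := by
    have hb : ‖(1-B)⁻¹‖ ≤ ‖(1:M3)‖ + ‖(1-B)⁻¹‖ * ‖B‖ := by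
      calc ‖(1-B)⁻¹‖ = ‖(1:M3) + (1-B)⁻¹ * B‖ := by rw [← hX]
        _ ≤ ‖(1:M3)‖ + ‖(1-B)⁻¹ * B‖ := norm_add_le _ _
        _ ≤ ‖(1:M3)‖ + ‖(1-B)⁻¹‖ * ‖B‖ := by gcongr; exact norm_mul_le _ _
    nlinarith [norm_nonneg ((1-B)⁻¹), norm_nonneg B, norm_one_le]
  have hTA : t • A = B + B := by
    rw [hBdef, ← add_smul]
    congr 1
    ring
  have hfact : (1 - B) * (R - (1 + t • A)) = B * B + B * B := by
    have e1 : (1 - B) * R = 1 + B := by rw [hRdef, ← mul_assoc, hI2, one_mul]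
    have e2 : (1 - B) * (R - (1 + t•A)) = (1 - B) * R - (1 - B) * (1 + t•A) := by noncomm_ring
    rw [e2, e1, hTA]
    noncomm_ring
  have hrem : R - (1 + t•A) = (1 - B)⁻¹ * (B * B + B * B) := by
    calc R - (1 + t•A) = ((1-B)⁻¹ * (1 - B)) * (R - (1 + t•A)) := by rw [hI1, one_mul]
      _ = (1-B)⁻¹ * ((1 - B) * (R - (1 + t•A))) := by rw [mul_assoc]
      _ = (1-B)⁻¹ * (B * B + B * B) := by rw [hfact]
  have hremnorm : ‖R - (1 + t•A)‖ ≤ 2 * t^2 * ‖A‖^2 := by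
    rw [hrem]
    have hBB : ‖B*B + B*B‖ ≤ 2 * (‖B‖ * ‖B‖) := by
      calc ‖B*B + B*B‖ ≤ ‖B*B‖ + ‖B*B‖ := norm_add_le _ _
        _ ≤ ‖B‖*‖B‖ + ‖B‖*‖B‖ := add_le_add (norm_mul_le _ _) (norm_mul_le _ _)
        _ = 2 * (‖B‖ * ‖B‖) := by ring
    calc ‖(1-B)⁻¹ * (B*B + B*B)‖ ≤ ‖(1-B)⁻¹‖ * ‖B*B + B*B‖ := norm_mul_le _ _
      _ ≤ 4 * (2 * (‖B‖ * ‖B‖)) := mul_le_mul hinv hBB (norm_nonneg _) (by norm_num)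
      _ = 8 * ‖B‖^2 := by ring
      _ = 2 * t^2 * ‖A‖^2 := by rw [hnB]; ring
  have hdecomp : (1 + t•G) - R = t • sym3 G - (R - (1 + t•A)) := by
    have hg : t • A = t • G - t • sym3 G := by rw [hAdef, smul_sub]
    rw [hg]; abel
  calc distSO3 (1 + t•G) ≤ frob3 ((1 + t•G) - R) := distSO3_le _ R hmem
    _ = ‖t • sym3 G - (R - (1 + t•A))‖ := by rw [frob3_eq, hdecomp]
    _ ≤ ‖t • sym3 G‖ + ‖R - (1 + t•A)‖ := norm_sub_le _ _
    _ ≤ t * frob3 (sym3 G) + 2*t^2* frob3 A^2 := by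
        rw [norm_smul, Real.norm_eq_abs, abs_of_pos ht, frob3_eq, frob3_eq]
        exact add_le_add le_rfl hremnorm

lemma lower_aux (G : M3) {t : ℝ} (ht : 0 < t) :
    t * frob3 (sym3 G) - t^2 - t^2/2 * (2 * frob3 G + t)^2 ≤ distSO3 (1 + t • G) := by
  obtain ⟨R, hR, hd⟩ := distSO3_exists_lt (1 + t • G) (by positivity : (0:ℝ) < t^2)
  set S := R - 1 with hS
  clear_value S
  have hRS : (1 + t•G) - R = t•G - S := by rw [hS]; abel
  have hsym : S + Sᵀ = -(Sᵀ * S) := by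
    have h2 : (1 + Sᵀ) * (1 + S) = 1 := by
      have e : (1 + S) = R := by rw [hS]; abel
      have e2 : (1 + Sᵀ) = Rᵀ := by
        rw [hS, Matrix.transpose_sub, Matrix.transpose_one]; abel
      rw [e, e2]; exact hR.1
    have h3 : 1 + (Sᵀ + S + Sᵀ * S) = 1 + (0:M3) := by
      have e : (1 + Sᵀ) * (1 + S) = 1 + (Sᵀ + S + Sᵀ * S) := by noncomm_ring
      rw [add_zero, ← e, h2]
    have h4 := add_left_cancel h3
    have h5 : (S + Sᵀ) + Sᵀ * S = 0 := by rw [add_comm S Sᵀ]; exact h4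
    exact eq_neg_of_add_eq_zero_left h5
  have hsymS : sym3 S = (1/2 : ℝ) • (-(Sᵀ * S)) := by
    rw [sym3, hsym]
  have hnormsymS : ‖sym3 S‖ ≤ 1/2 * ‖S‖^2 := by
    rw [hsymS, norm_smul, norm_neg]
    have : ‖Sᵀ * S‖ ≤ ‖S‖ * ‖S‖ := by
      calc ‖Sᵀ * S‖ ≤ ‖Sᵀ‖ * ‖S‖ := norm_mul_le _ _
        _ = ‖S‖ * ‖S‖ := by rw [Matrix.frobenius_norm_transpose]
    calc ‖(1/2:ℝ)‖ * ‖Sᵀ * S‖ ≤ ‖(1/2:ℝ)‖ * (‖S‖ * ‖S‖) := by gcongr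
      _ = 1/2 * ‖S‖^2 := by rw [show ‖(1/2:ℝ)‖ = 1/2 by norm_num]; ring
  set d := ‖t•G - S‖ with hddef
  have hdist0 : 0 ≤ distSO3 (1 + t•G) := distSO3_nonneg _
  have hdistle : distSO3 (1 + t•G) ≤ t * ‖G‖ := by
    have := distSO3_le_id (1 + t•G)
    rwa [add_sub_cancel_left, frob3_eq, norm_smul, Real.norm_eq_abs, abs_of_pos ht] at this
  have hd' : d < distSO3 (1 + t•G) + t^2 := by
    rw [hddef, ← hRS, ← frob3_eq]; exact hd
  have hSle : ‖S‖ ≤ d + t*‖G‖ := by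
    calc ‖S‖ = ‖t•G - (t•G - S)‖ := by rw [sub_sub_cancel]
      _ ≤ ‖t•G‖ + ‖t•G - S‖ := norm_sub_le _ _
      _ = t*‖G‖ + d := by rw [norm_smul, Real.norm_eq_abs, abs_of_pos ht]
      _ = d + t*‖G‖ := by ring
  have hts : t * ‖sym3 G‖ ≤ d + ‖sym3 S‖ := by
    have e : t • sym3 G = sym3 (t•G - S) + sym3 S := by rw [sym3_sub, sym3_smul]; abel
    calc t * ‖sym3 G‖ = ‖t • sym3 G‖ := by
          rw [norm_smul, Real.norm_eq_abs, abs_of_pos ht]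
      _ ≤ ‖sym3 (t•G - S)‖ + ‖sym3 S‖ := by rw [e]; exact norm_add_le _ _
      _ ≤ ‖t•G - S‖ + ‖sym3 S‖ := by gcongr; exact sym3_norm_le _
      _ = d + ‖sym3 S‖ := rfl
  have hdnn : 0 ≤ d := norm_nonneg _
  have hgnn : (0:ℝ) ≤ ‖G‖ := norm_nonneg _
  have hSnn : (0:ℝ) ≤ ‖S‖ := norm_nonneg _
  have hSle2 : ‖S‖ ≤ 2*t*‖G‖ + t^2 := by nlinarith
  have hsq : ‖S‖^2 ≤ (2*t*‖G‖ + t^2)^2 := by nlinarith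
  have key : t * ‖sym3 G‖ ≤ distSO3 (1 + t•G) + t^2 + t^2/2 * (2*‖G‖ + t)^2 := by
    nlinarith
  rw [frob3_eq, frob3_eq]
  linarith

lemma distSO3_tendsto (G : M3) :
    Tendsto (fun t : ℝ => distSO3 (1 + t • G) / t) (𝓝[>] (0:ℝ)) (𝓝 (frob3 (sym3 G))) := by
  set s := frob3 (sym3 G) with hs
  set g := frob3 G with hg
  set a := frob3 (G - sym3 G) with ha
  have hann : 0 ≤ a := frob3_nonneg _
  have hlo : Tendsto (fun t : ℝ => s - t - t/2 * (2*g + t)^2) (𝓝[>] (0:ℝ)) (𝓝 s) := by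
    have hc : Continuous (fun t : ℝ => s - t - t/2 * (2*g + t)^2) := by continuity
    have := (hc.tendsto 0).mono_left (nhdsWithin_le_nhds (s := Set.Ioi (0:ℝ)))
    simpa using this
  have hup : Tendsto (fun t : ℝ => s + 2*t*a^2) (𝓝[>] (0:ℝ)) (𝓝 s) := by
    have hc : Continuous (fun t : ℝ => s + 2*t*a^2) := by continuity
    have := (hc.tendsto 0).mono_left (nhdsWithin_le_nhds (s := Set.Ioi (0:ℝ)))
    simpa using this
  refine tendsto_of_tendsto_of_tendsto_of_le_of_le' hlo hup ?_ ?_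
  · filter_upwards [self_mem_nhdsWithin] with t ht
    have ht : 0 < t := ht
    have := lower_aux G ht
    rw [le_div_iff₀ ht]
    calc (s - t - t/2*(2*g+t)^2) * t = t*s - t^2 - t^2/2 * (2*g+t)^2 := by ring
      _ ≤ distSO3 (1 + t • G) := this
  · have hmem : Set.Ioo (0:ℝ) (1/(a+1)) ∈ 𝓝[>] (0:ℝ) :=
      Ioo_mem_nhdsGT_of_mem ⟨le_refl 0, by positivity⟩
    filter_upwards [hmem] with t ht
    obtain ⟨ht0, ht1⟩ := ht
    have ht1' : t * (a + 1) ≤ 1 := by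
      rw [lt_div_iff₀ (by positivity : (0:ℝ) < a+1)] at ht1
      linarith
    have := upper_aux G ht0 ht1'
    rw [div_le_iff₀ ht0]
    calc distSO3 (1 + t • G) ≤ t * s + 2*t^2*a^2 := this
      _ = (s + 2*t*a^2) * t := by ring


end Aux

/-- If W is nonnegative, continuous, satisfies the non-degeneracy bounds
`c₁ dist²(F,SO(3)) ≤ W(F)` and `W(F) ≤ c₂ dist²(F,SO(3))` for `dist² ≤ ρ`, and admits the
quadratic expansion `W(I+G) = Q(G) + o(|G|²)` at the identity with Q a quadratic form,
then `c₁|sym G|² ≤ Q(G) ≤ c₂|sym G|²` for all G. -/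
theorem stmt1 (c₁ c₂ ρ : ℝ) (hc₁ : 0 < c₁) (hc₂ : 0 < c₂) (hρ : 0 < ρ)
    (W : Matrix (Fin 3) (Fin 3) ℝ → ℝ) (hW0 : ∀ F, 0 ≤ W F) (hWc : Continuous W)
    (hlow : ∀ F, c₁ * (distSO3 F) ^ 2 ≤ W F)
    (hup : ∀ F, (distSO3 F) ^ 2 ≤ ρ → W F ≤ c₂ * (distSO3 F) ^ 2)
    (Q : Matrix (Fin 3) (Fin 3) ℝ → ℝ)
    (L : Matrix (Fin 3) (Fin 3) ℝ →ₗ[ℝ] Matrix (Fin 3) (Fin 3) ℝ →ₗ[ℝ] ℝ)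
    (hLsymm : ∀ A B, L A B = L B A) (hQL : ∀ G, Q G = L G G)
    (hexp : Tendsto (fun G => (W (1 + G) - Q G) / (frob3 G) ^ 2)
      (𝓝[≠] (0 : Matrix (Fin 3) (Fin 3) ℝ)) (𝓝 0)) :
    ∀ G : Matrix (Fin 3) (Fin 3) ℝ,
      c₁ * (frob3 (sym3 G)) ^ 2 ≤ Q G ∧ Q G ≤ c₂ * (frob3 (sym3 G)) ^ 2 := by
  intro G
  by_cases hG : G = 0
  · subst hG
    have hQ0 : Q 0 = 0 := by rw [hQL]; simp
    have hs0 : frob3 (sym3 (0 : M3)) = 0 := by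
      have h : sym3 (0 : M3) = 0 := by simp [sym3]
      rw [h, frob3]
      simp
    rw [hQ0, hs0]
    norm_num
  · set s := frob3 (sym3 G) with hsdef
    set g := frob3 G with hgdef
    have hgpos : 0 < g := frob3_pos G hG
    have hmap : Tendsto (fun t : ℝ => t • G) (𝓝[>] (0:ℝ)) (𝓝[≠] (0 : M3)) := by
      rw [tendsto_nhdsWithin_iff]
      constructor
      · have hc : Continuous (fun t : ℝ => t • G) := continuous_id.smul continuous_const
        have := (hc.tendsto 0).mono_left (nhdsWithin_le_nhds (s := Set.Ioi (0:ℝ)))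
        simpa using this
      · filter_upwards [self_mem_nhdsWithin] with t ht
        exact Set.mem_compl_singleton_iff.mpr (smul_ne_zero (ne_of_gt ht) hG)
    have h1 : Tendsto (fun t : ℝ => (W (1 + t • G) - Q (t • G)) / (frob3 (t • G))^2)
        (𝓝[>] (0:ℝ)) (𝓝 0) := hexp.comp hmap
    have hQt : ∀ t : ℝ, Q (t • G) = t^2 * Q G := by
      intro t
      rw [hQL, hQL, L.map_smul, LinearMap.smul_apply, (L G).map_smul]
      simp only [smul_eq_mul]
      ring
    have hV : Tendsto (fun t : ℝ => W (1 + t • G) / t^2) (𝓝[>] (0:ℝ)) (𝓝 (Q G)) := by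
      have h2 : Tendsto (fun t : ℝ =>
          ((W (1 + t•G) - Q (t•G)) / (frob3 (t•G))^2) * g^2 + Q G)
          (𝓝[>] (0:ℝ)) (𝓝 (0 * g^2 + Q G)) := (h1.mul_const _).add_const _
      rw [zero_mul, zero_add] at h2
      refine h2.congr' ?_
      filter_upwards [self_mem_nhdsWithin] with t ht
      have ht : (0:ℝ) < t := ht
      rw [hQt, frob3_smul, abs_of_pos ht, ← hgdef]
      have htne : (t:ℝ) ≠ 0 := ne_of_gt ht
      have hgne : g ≠ 0 := ne_of_gt hgpos
      field_simp
      ring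
    have hD := distSO3_tendsto G
    rw [← hsdef] at hD
    have hL : Tendsto (fun t : ℝ => c₁ * (distSO3 (1 + t • G) / t)^2)
        (𝓝[>] (0:ℝ)) (𝓝 (c₁ * s^2)) := (hD.pow 2).const_mul c₁
    have hU : Tendsto (fun t : ℝ => c₂ * (distSO3 (1 + t • G) / t)^2)
        (𝓝[>] (0:ℝ)) (𝓝 (c₂ * s^2)) := (hD.pow 2).const_mul c₂
    have hdist_le : ∀ t : ℝ, 0 < t → distSO3 (1 + t • G) ≤ t * g := by
      intro t ht
      have := distSO3_le_id (1 + t • G)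
      rwa [add_sub_cancel_left, frob3_smul, abs_of_pos ht, ← hgdef] at this
    have hlow' : ∀ᶠ t in 𝓝[>] (0:ℝ),
        c₁ * (distSO3 (1 + t • G) / t)^2 ≤ W (1 + t • G) / t^2 := by
      filter_upwards [self_mem_nhdsWithin] with t ht
      have ht : (0:ℝ) < t := ht
      have h := hlow (1 + t • G)
      calc c₁ * (distSO3 (1 + t • G) / t)^2
          = (c₁ * (distSO3 (1 + t • G))^2) / t^2 := by ring
        _ ≤ W (1 + t • G) / t^2 := by gcongr
    have hup' : ∀ᶠ t in 𝓝[>] (0:ℝ),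
        W (1 + t • G) / t^2 ≤ c₂ * (distSO3 (1 + t • G) / t)^2 := by
      have hmem : Set.Ioo (0:ℝ) (Real.sqrt ρ / (g+1)) ∈ 𝓝[>] (0:ℝ) :=
        Ioo_mem_nhdsGT_of_mem ⟨le_refl 0, by positivity⟩
      filter_upwards [hmem] with t ht
      obtain ⟨ht0, ht1⟩ := ht
      have hdnn : 0 ≤ distSO3 (1 + t • G) := distSO3_nonneg _
      have h1' : distSO3 (1 + t • G) < Real.sqrt ρ := by
        have : t * g < Real.sqrt ρ := by
          rw [lt_div_iff₀ (by positivity : (0:ℝ) < g+1)] at ht1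
          nlinarith
        exact lt_of_le_of_lt (hdist_le t ht0) this
      have hρ' : (distSO3 (1 + t • G))^2 ≤ ρ := by
        have := Real.sq_sqrt hρ.le
        nlinarith
      have h := hup (1 + t • G) hρ'
      calc W (1 + t • G) / t^2 ≤ (c₂ * (distSO3 (1 + t • G))^2) / t^2 := by gcongr
        _ = c₂ * (distSO3 (1 + t • G) / t)^2 := by ring
    exact ⟨le_of_tendsto_of_tendsto hL hV hlow', le_of_tendsto_of_tendsto hV hU hup'⟩


end
end

section
/- Let Q : ℝ^{3×3} → ℝ be a quadratic form with c₁|sym G|² ≤ Q(G) = Q(sym G) ≤ c₂|sym G|² for positive constants c₁ ≤ c₂. Define on ℝ^{2×2}_sym the reduced form Q₂(A) = min_{d ∈ ℝ³} Q(ι(A) + d ⊗ e₃), where ι(A) is the 3×3 matrix with upper-left 2×2 block A and zeros elsewhere, and d ⊗ e₃ is the matrix whose third column is d and other columns are zero. Then the minimum is attained, the minimizing d depends linearly on A, and Q₂ is a quadratic form on ℝ^{2×2}_sym satisfying c₁'|A|² ≤ Q₂(A) ≤ c₂|A|² for some constant c₁' > 0 depending only on c₁ and c₂. -/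
/-!
Write `Q G = L G G`. On the directions `d ⊗ e₃` the form is coercive, because
`|sym (d ⊗ e₃)|² = d₀²/2 + d₁²/2 + d₂² > 0` for `d ≠ 0`; hence `(d, h) ↦ L (d ⊗ e₃) (h ⊗ e₃)` is a
nondegenerate bilinear form on `ℝ³` and identifies `ℝ³` with its dual. Pulling back the functional
`h ↦ -L (ι A) (h ⊗ e₃)` along this identification gives the unique `T A` for which
`ι A + T A ⊗ e₃` is `L`-orthogonal to every `h ⊗ e₃`; it is linear in `A`, and orthogonality makes
it the minimizer. Since `sym (ι A + d ⊗ e₃)` has `A` as its upper-left block, `c₁' = c₁` works,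
and comparing with `d = 0` gives the upper bound.
-/

open Matrix

noncomputable section

def frob2 (M : Matrix (Fin 2) (Fin 2) ℝ) : ℝ := Real.sqrt (∑ i, ∑ j, (M i j) ^ 2)

/-- The embedding of a 2×2 matrix into the upper-left block of a 3×3 matrix. -/
def iota (A : Matrix (Fin 2) (Fin 2) ℝ) : Matrix (Fin 3) (Fin 3) ℝ :=
  Matrix.of ![![A 0 0, A 0 1, 0], ![A 1 0, A 1 1, 0], ![0, 0, 0]]

/-- The 3×3 matrix d ⊗ e₃ whose third column is d and whose other columns vanish. -/
def colmat (d : Fin 3 → ℝ) : Matrix (Fin 3) (Fin 3) ℝ :=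
  Matrix.of ![![0, 0, d 0], ![0, 0, d 1], ![0, 0, d 2]]

section MinimizationAlongSubspace

variable {E V : Type*} [AddCommGroup E] [Module ℝ E] [AddCommGroup V] [Module ℝ V]
  (L : E →ₗ[ℝ] E →ₗ[ℝ] ℝ) (P : V →ₗ[ℝ] E)

lemma apply_self_le_apply_add_self_of_orthogonal (hL : ∀ x y, L x y = L y x) {y z : E}
    (hyz : L y z = 0) (hz : 0 ≤ L z z) : L y y ≤ L (y + z) (y + z) := by
  have hzy : L z y = 0 := (hL z y).trans hyz
  simp only [map_add, LinearMap.add_apply]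
  linarith

lemma nondegenerate_compl₁₂_of_pos (hpos : ∀ d ≠ 0, 0 < L (P d) (P d)) :
    (L.compl₁₂ P P).Nondegenerate :=
  ⟨fun d hd => by_contra fun h => (hpos d h).ne' (hd d),
    fun d hd => by_contra fun h => (hpos d h).ne' (hd d)⟩

lemma exists_linearMap_apply_add_apply_eq_zero [FiniteDimensional ℝ V]
    (hpos : ∀ d ≠ 0, 0 < L (P d) (P d)) :
    ∃ T : E →ₗ[ℝ] V, ∀ x h, L (x + P (T x)) (P h) = 0 := by
  let B : LinearMap.BilinForm ℝ V := L.compl₁₂ P P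
  have hB := nondegenerate_compl₁₂_of_pos L P hpos
  refine ⟨-((B.toDual hB).symm.toLinearMap ∘ₗ L.compl₂ P), fun x h => ?_⟩
  have hTx : L (P ((B.toDual hB).symm (L.compl₂ P x))) (P h) = L x (P h) :=
    B.apply_toDual_symm_apply (hB := hB) (L.compl₂ P x) h
  simp [hTx]

theorem exists_linearMap_minimizer [FiniteDimensional ℝ V] (hL : ∀ x y, L x y = L y x)
    (hpos : ∀ d ≠ 0, 0 < L (P d) (P d)) :
    ∃ T : E →ₗ[ℝ] V, ∀ x d, L (x + P (T x)) (x + P (T x)) ≤ L (x + P d) (x + P d) := by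
  obtain ⟨T, hT⟩ := exists_linearMap_apply_add_apply_eq_zero L P hpos
  refine ⟨T, fun x d => ?_⟩
  have hsplit : x + P d = (x + P (T x)) + P (d - T x) := by rw [map_sub]; abel
  have hnonneg : 0 ≤ L (P (d - T x)) (P (d - T x)) := by
    rcases eq_or_ne (d - T x) 0 with h | h
    · simp [h]
    · exact (hpos _ h).le
  rw [hsplit]
  exact apply_self_le_apply_add_self_of_orthogonal L hL (hT x _) hnonneg

end MinimizationAlongSubspace

def colmatL : (Fin 3 → ℝ) →ₗ[ℝ] Matrix (Fin 3) (Fin 3) ℝ where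
  toFun := colmat
  map_add' d e := by ext i j; fin_cases i <;> fin_cases j <;> simp [colmat]
  map_smul' c d := by ext i j; fin_cases i <;> fin_cases j <;> simp [colmat]

def iotaL : Matrix (Fin 2) (Fin 2) ℝ →ₗ[ℝ] Matrix (Fin 3) (Fin 3) ℝ where
  toFun := iota
  map_add' A B := by ext i j; fin_cases i <;> fin_cases j <;> simp [iota]
  map_smul' c A := by ext i j; fin_cases i <;> fin_cases j <;> simp [iota]

lemma frob3_sym3_iota_add_colmat_sq {A : Matrix (Fin 2) (Fin 2) ℝ} (hA : Aᵀ = A)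
    (d : Fin 3 → ℝ) :
    frob3 (sym3 (iota A + colmat d)) ^ 2
      = frob2 A ^ 2 + (d 0 ^ 2 / 2 + d 1 ^ 2 / 2 + d 2 ^ 2) := by
  have hA₁₀ : A 1 0 = A 0 1 := congrFun (congrFun hA 0) 1
  unfold frob3 frob2 sym3
  rw [Real.sq_sqrt (by positivity), Real.sq_sqrt (by positivity)]
  simp [Fin.sum_univ_three, Fin.sum_univ_two, iota, colmat, hA₁₀]
  ring

lemma frob2_sq_le_frob3_sym3_iota_add_colmat_sq {A : Matrix (Fin 2) (Fin 2) ℝ} (hA : Aᵀ = A)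
    (d : Fin 3 → ℝ) : frob2 A ^ 2 ≤ frob3 (sym3 (iota A + colmat d)) ^ 2 := by
  rw [frob3_sym3_iota_add_colmat_sq hA]
  have : 0 ≤ d 0 ^ 2 / 2 + d 1 ^ 2 / 2 + d 2 ^ 2 := by positivity
  linarith

lemma frob3_sym3_colmat_pos {d : Fin 3 → ℝ} (hd : d ≠ 0) : 0 < frob3 (sym3 (colmat d)) := by
  have h := frob3_sym3_iota_add_colmat_sq (transpose_zero) d
  have hiota : iota 0 = 0 := map_zero iotaL
  rw [hiota, zero_add] at h
  obtain ⟨i, hi⟩ := Function.ne_iff.mp hd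
  have : 0 < frob3 (sym3 (colmat d)) ^ 2 := by
    rw [h]
    fin_cases i <;> simp at hi <;> positivity
  exact (Real.sqrt_nonneg _).lt_of_ne (sq_pos_iff.mp this).symm

theorem stmt6_general (c₁ c₂ : ℝ) (hc₁ : 0 < c₁)
    (Q : Matrix (Fin 3) (Fin 3) ℝ → ℝ)
    (L : Matrix (Fin 3) (Fin 3) ℝ →ₗ[ℝ] Matrix (Fin 3) (Fin 3) ℝ →ₗ[ℝ] ℝ)
    (hLsymm : ∀ A B, L A B = L B A) (hQL : ∀ G, Q G = L G G)
    (hlow : ∀ G, c₁ * (frob3 (sym3 G)) ^ 2 ≤ Q G)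
    (hup : ∀ G, Q G ≤ c₂ * (frob3 (sym3 G)) ^ 2) :
    ∃ (c₁' : ℝ) (T : Matrix (Fin 2) (Fin 2) ℝ →ₗ[ℝ] (Fin 3 → ℝ))
      (L₂ : Matrix (Fin 2) (Fin 2) ℝ →ₗ[ℝ] Matrix (Fin 2) (Fin 2) ℝ →ₗ[ℝ] ℝ),
      0 < c₁' ∧ (∀ A B, L₂ A B = L₂ B A) ∧
      ∀ A : Matrix (Fin 2) (Fin 2) ℝ, Aᵀ = A →
        (∀ d : Fin 3 → ℝ, Q (iota A + colmat (T A)) ≤ Q (iota A + colmat d)) ∧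
        Q (iota A + colmat (T A)) = L₂ A A ∧
        c₁' * (frob2 A) ^ 2 ≤ Q (iota A + colmat (T A)) ∧
        Q (iota A + colmat (T A)) ≤ c₂ * (frob2 A) ^ 2 := by
  have hpos : ∀ d ≠ 0, 0 < L (colmatL d) (colmatL d) := fun d hd =>
    (mul_pos hc₁ (pow_pos (frob3_sym3_colmat_pos hd) 2)).trans_le ((hlow _).trans_eq (hQL _))
  obtain ⟨T, hT⟩ := exists_linearMap_minimizer L colmatL hLsymm hpos
  let F := iotaL + colmatL ∘ₗ T ∘ₗ iotaL
  refine ⟨c₁, T ∘ₗ iotaL, L.compl₁₂ F F, hc₁, fun A B => hLsymm _ _, fun A hA => ?_⟩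
  have hmin : ∀ d, Q (iota A + colmat (T (iota A))) ≤ Q (iota A + colmat d) := fun d => by
    rw [hQL, hQL]
    exact hT (iota A) d
  refine ⟨hmin, hQL _, ?_, ?_⟩
  · exact (mul_le_mul_of_nonneg_left (frob2_sq_le_frob3_sym3_iota_add_colmat_sq hA _)
      hc₁.le).trans (hlow _)
  · calc Q (iota A + colmat (T (iota A))) ≤ Q (iota A + colmat 0) := hmin 0
      _ ≤ c₂ * frob3 (sym3 (iota A + colmat 0)) ^ 2 := hup _
      _ = c₂ * frob2 A ^ 2 := by simp [frob3_sym3_iota_add_colmat_sq hA]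

/-- For a quadratic form Q on ℝ^{3×3} with `c₁|sym G|² ≤ Q(G) = Q(sym G) ≤ c₂|sym G|²`,
the reduced form `Q₂(A) = min_d Q(ι(A) + d ⊗ e₃)` on symmetric 2×2 matrices: the minimum
is attained, the minimizer depends linearly on A, Q₂ is a quadratic form, and
`c₁'|A|² ≤ Q₂(A) ≤ c₂|A|²` for some c₁' > 0. -/
theorem stmt6 (c₁ c₂ : ℝ) (hc₁ : 0 < c₁) (hcc : c₁ ≤ c₂)
    (Q : Matrix (Fin 3) (Fin 3) ℝ → ℝ)
    (L : Matrix (Fin 3) (Fin 3) ℝ →ₗ[ℝ] Matrix (Fin 3) (Fin 3) ℝ →ₗ[ℝ] ℝ)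
    (hLsymm : ∀ A B, L A B = L B A) (hQL : ∀ G, Q G = L G G)
    (hQsym : ∀ G, Q G = Q (sym3 G))
    (hlow : ∀ G, c₁ * (frob3 (sym3 G)) ^ 2 ≤ Q G)
    (hup : ∀ G, Q G ≤ c₂ * (frob3 (sym3 G)) ^ 2) :
    ∃ (c₁' : ℝ) (T : Matrix (Fin 2) (Fin 2) ℝ →ₗ[ℝ] (Fin 3 → ℝ))
      (L₂ : Matrix (Fin 2) (Fin 2) ℝ →ₗ[ℝ] Matrix (Fin 2) (Fin 2) ℝ →ₗ[ℝ] ℝ),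
      0 < c₁' ∧ (∀ A B, L₂ A B = L₂ B A) ∧
      ∀ A : Matrix (Fin 2) (Fin 2) ℝ, Aᵀ = A →
        (∀ d : Fin 3 → ℝ, Q (iota A + colmat (T A)) ≤ Q (iota A + colmat d)) ∧
        Q (iota A + colmat (T A)) = L₂ A A ∧
        c₁' * (frob2 A) ^ 2 ≤ Q (iota A + colmat (T A)) ∧
        Q (iota A + colmat (T A)) ≤ c₂ * (frob2 A) ^ 2 :=
  stmt6_general c₁ c₂ hc₁ Q L hLsymm hQL hlow hup

end
end

section
/- Let g ∈ C(𝒴) be a continuous Y-periodic function on ℝ² (Y = [0,1)²) with ∫_Y g(y) dy = 0, let ψ ∈ C_c^∞(S) for a bounded open set S ⊂ ℝ², and let ε(h) → 0. Suppose f^h ∈ L^∞(S) is, for each h, constant on each cube ξ + ε(h)Y with ξ ∈ ε(h)ℤ², and f^h ⇀* f⁰ weakly-* in L^∞(S). Then (1/ε(h)) ∫_S f^h(x) ψ(x) g(x/ε(h)) dx → (∫_S f⁰(x) ∇ψ(x) dx) · (∫_Y g(y) y dy) as h → 0. -/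
open MeasureTheory Filter Topology

noncomputable section

/-- The unit cell Y = [0,1)². -/
def Ycube : Set (Fin 2 → ℝ) := Set.pi Set.univ fun _ => Set.Ico (0:ℝ) 1

lemma Ycube_meas : MeasurableSet Ycube :=
  MeasurableSet.univ_pi fun _ => measurableSet_Ico

lemma meas_xi (ε : ℝ) : Measurable (fun x : Fin 2 → ℝ => fun i => ε * (⌊x i / ε⌋ : ℝ)) := by
  refine measurable_pi_lambda _ fun i => ?_
  have h1 : Measurable fun x : Fin 2 → ℝ => ⌊x i / ε⌋ :=
    (by fun_prop : Measurable fun x : Fin 2 → ℝ => x i / ε).floor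
  exact measurable_const.mul (measurable_from_top.comp h1)

lemma meas_div (ε : ℝ) : Measurable (fun x : Fin 2 → ℝ => fun i => x i / ε) :=
  measurable_pi_lambda _ fun i => by fun_prop

-- the cell of index k
def cell (ε : ℝ) (k : Fin 2 → ℤ) : Set (Fin 2 → ℝ) := {x | ∀ i, ⌊x i / ε⌋ = k i}

lemma cell_meas (ε : ℝ) (k : Fin 2 → ℤ) : MeasurableSet (cell ε k) := by
  have : cell ε k = ⋂ i, (fun x : Fin 2 → ℝ => ⌊x i / ε⌋) ⁻¹' {k i} := by
    ext x; simp [cell]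
  rw [this]
  exact MeasurableSet.iInter fun i =>
    (by fun_prop : Measurable fun x : Fin 2 → ℝ => x i / ε).floor (measurableSet_singleton _)

lemma cell_eq_pi (ε : ℝ) (hε : 0 < ε) (k : Fin 2 → ℤ) :
    cell ε k = Set.pi Set.univ fun i => Set.Ico (ε * k i) (ε * (k i + 1)) := by
  ext x
  simp only [cell, Set.mem_setOf_eq, Set.mem_pi, Set.mem_univ, Set.mem_Ico, true_implies]
  refine forall_congr' fun i => ?_
  rw [Int.floor_eq_iff]
  constructor
  · rintro ⟨h1, h2⟩
    constructor
    · calc ε * k i ≤ ε * (x i / ε) := by nlinarith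
        _ = x i := by field_simp
    · calc x i = ε * (x i / ε) := by field_simp
        _ < ε * (k i + 1) := by nlinarith
  · rintro ⟨h1, h2⟩
    constructor
    · rw [le_div_iff₀ hε]; linarith [h1]
    · rw [div_lt_iff₀ hε]; linarith [h2]

lemma cell_vol (ε : ℝ) (hε : 0 < ε) (k : Fin 2 → ℤ) :
    volume (cell ε k) = ENNReal.ofReal (ε * ε) := by
  rw [cell_eq_pi ε hε k, volume_pi_pi]
  have : ∀ i : Fin 2, volume (Set.Ico (ε * k i) (ε * (k i + 1))) = ENNReal.ofReal ε := by
    intro i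
    rw [Real.volume_Ico]
    congr 1
    ring
  simp only [this, Fin.prod_univ_two]
  rw [← ENNReal.ofReal_mul hε.le]

lemma cell_union (ε : ℝ) : (⋃ k : Fin 2 → ℤ, cell ε k) = Set.univ := by
  ext x
  simp only [Set.mem_iUnion, Set.mem_univ, iff_true]
  exact ⟨fun i => ⌊x i / ε⌋, fun i => rfl⟩

lemma cell_disj (ε : ℝ) : Pairwise (Function.onFun Disjoint (cell ε)) := by
  intro k k' hne
  rw [Function.onFun, Set.disjoint_left]
  intro x hx hx'
  exact hne (funext fun i => (hx i).symm.trans (hx' i))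

-- ∫ over a cell of G(x/ε) equals ε² ∫_Y G, for G periodic
lemma cell_scale (ε : ℝ) (hε : 0 < ε) (G : (Fin 2 → ℝ) → ℝ)
    (hGper : ∀ (y : Fin 2 → ℝ) (k : Fin 2 → ℤ), G (y + fun i => (k i : ℝ)) = G y)
    (k : Fin 2 → ℤ) :
    ∫ x in cell ε k, G (fun i => x i / ε) = (ε * ε) * ∫ y in Ycube, G y := by
  classical
  set kR : Fin 2 → ℝ := fun i => (k i : ℝ) with hkR
  set cellY : Set (Fin 2 → ℝ) := Set.pi Set.univ fun i => Set.Ico (k i : ℝ) (k i + 1) with hcY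
  have hmemY : ∀ x : Fin 2 → ℝ, x ∈ cellY ↔ ∀ i, (k i : ℝ) ≤ x i ∧ x i < k i + 1 := by
    intro x; simp [hcY]
  -- step 1 : ∫_{cell ε k} G(x/ε) = ε² ∫_{cellY} G
  have hsmul : ∀ x : Fin 2 → ℝ,
      Set.indicator cellY G (ε⁻¹ • x) =
      Set.indicator (cell ε k) (fun x => G (fun i => x i / ε)) x := by
    intro x
    have hx : (ε⁻¹ • x) = fun i => x i / ε := by
      funext i; simp [div_eq_inv_mul]
    rw [hx]
    by_cases hmem : x ∈ cell ε k
    · rw [Set.indicator_of_mem hmem]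
      rw [Set.indicator_of_mem]
      rw [hmemY]
      intro i
      have := hmem i
      rw [Int.floor_eq_iff] at this
      exact this
    · rw [Set.indicator_of_notMem hmem, Set.indicator_of_notMem]
      rw [hmemY]
      push_neg
      by_contra hcon
      push_neg at hcon
      exact hmem fun i => by
        rw [Int.floor_eq_iff]; exact hcon i
  have hstep1 : ∫ x in cell ε k, G (fun i => x i / ε) = (ε * ε) * ∫ y in cellY, G y := by
    rw [← integral_indicator (cell_meas ε k)]
    have := MeasureTheory.Measure.integral_comp_smul (μ := volume)
      (f := Set.indicator cellY G) (ε⁻¹)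
    simp only [hsmul] at this
    rw [this, integral_indicator]
    · have hrank : Module.finrank ℝ (Fin 2 → ℝ) = 2 := by simp
      rw [hrank]
      rw [smul_eq_mul]
      congr 1
      rw [abs_of_nonneg]
      · field_simp
      · positivity
    · exact MeasurableSet.univ_pi fun _ => measurableSet_Ico
  -- step 2 : ∫_{cellY} G = ∫_{Ycube} G
  have hstep2 : ∫ y in cellY, G y = ∫ y in Ycube, G y := by
    rw [← integral_indicator (MeasurableSet.univ_pi fun _ => measurableSet_Ico),
        ← integral_indicator Ycube_meas]
    rw [← integral_add_right_eq_self (Set.indicator cellY G) kR]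
    congr 1
    funext x
    have hmem : (x + kR) ∈ cellY ↔ x ∈ Ycube := by
      rw [hmemY]
      simp only [Ycube, Set.mem_pi, Set.mem_univ, Set.mem_Ico, true_implies, Pi.add_apply]
      refine forall_congr' fun i => ?_
      simp only [hkR]
      constructor <;> intro h <;> exact ⟨by linarith [h.1], by linarith [h.2]⟩
    by_cases hx : x ∈ Ycube
    · rw [Set.indicator_of_mem (hmem.2 hx), Set.indicator_of_mem hx, hGper]
    · rw [Set.indicator_of_notMem (fun hc => hx (hmem.1 hc)), Set.indicator_of_notMem hx]
  rw [hstep1, hstep2]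

lemma key_cell (ε : ℝ) (hε : 0 < ε) (G H : (Fin 2 → ℝ) → ℝ)
    (hGm : Measurable G) (MG : ℝ) (hGb : ∀ y, |G y| ≤ MG)
    (hGper : ∀ (y : Fin 2 → ℝ) (k : Fin 2 → ℤ), G (y + fun i => (k i : ℝ)) = G y)
    (hHm : Measurable H) (MH : ℝ) (hHb : ∀ x, |H x| ≤ MH)
    (hHc : ∀ x, H x = H (fun i => ε * (⌊x i / ε⌋ : ℝ)))
    (S : Set (Fin 2 → ℝ)) (hSm : MeasurableSet S) (hSb : Bornology.IsBounded S)
    (hsupp : ∀ x y : Fin 2 → ℝ, H x ≠ 0 → (∀ i, ⌊y i / ε⌋ = ⌊x i / ε⌋) → y ∈ S) :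
    ∫ x in S, H x * G (fun i => x i / ε) = (∫ y in Ycube, G y) * ∫ x in S, H x := by
  have hSfin : volume S < ⊤ := hSb.measure_lt_top
  have hzero : ∀ x, x ∉ S → H x = 0 := by
    intro x hx
    by_contra hc
    exact hx (hsupp x x hc fun i => rfl)
  have hGM : Measurable fun x : Fin 2 → ℝ => G (fun i => x i / ε) := hGm.comp (meas_div ε)
  have hFm : Measurable fun x : Fin 2 → ℝ => H x * G (fun i => x i / ε) := hHm.mul hGM
  -- integrability on all of ℝ²
  have hind : Integrable (Set.indicator S fun _ : Fin 2 → ℝ => MH * MG) volume := by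
    rw [integrable_indicator_iff hSm]
    exact integrableOn_const hSfin.ne
  have hInt : Integrable (fun x => H x * G (fun i => x i / ε)) volume := by
    refine Integrable.mono' hind hFm.aestronglyMeasurable (Filter.Eventually.of_forall fun x => ?_)
    by_cases hx : x ∈ S
    · rw [Set.indicator_of_mem hx]
      calc ‖H x * G (fun i => x i / ε)‖ = |H x| * |G (fun i => x i / ε)| := by
            rw [Real.norm_eq_abs, abs_mul]
        _ ≤ MH * MG := by
            refine mul_le_mul (hHb x) (hGb _) (abs_nonneg _) ?_
            exact le_trans (abs_nonneg _) (hHb x)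
    · rw [Set.indicator_of_notMem hx, hzero x hx]
      simp
  have hindH : Integrable (Set.indicator S fun _ : Fin 2 → ℝ => MH) volume := by
    rw [integrable_indicator_iff hSm]
    exact integrableOn_const hSfin.ne
  have hIntH : Integrable H volume := by
    refine Integrable.mono' hindH hHm.aestronglyMeasurable
      (Filter.Eventually.of_forall fun x => ?_)
    by_cases hx : x ∈ S
    · rw [Set.indicator_of_mem hx, Real.norm_eq_abs]; exact hHb x
    · rw [Set.indicator_of_notMem hx, hzero x hx]; simp
  -- reduce set integrals to full integrals
  have hred1 : ∫ x in S, H x * G (fun i => x i / ε) = ∫ x, H x * G (fun i => x i / ε) := by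
    refine setIntegral_eq_integral_of_forall_compl_eq_zero fun x hx => ?_
    rw [hzero x hx, zero_mul]
  have hred2 : ∫ x in S, H x = ∫ x, H x :=
    setIntegral_eq_integral_of_forall_compl_eq_zero fun x hx => hzero x hx
  rw [hred1, hred2]
  -- decompose over cells
  have hdec1 : ∫ x, H x * G (fun i => x i / ε)
      = ∑' k : Fin 2 → ℤ, ∫ x in cell ε k, H x * G (fun i => x i / ε) := by
    rw [← setIntegral_univ, ← cell_union ε]
    exact integral_iUnion (cell_meas ε) (cell_disj ε) hInt.integrableOn
  have hdec2 : ∫ x, H x = ∑' k : Fin 2 → ℤ, ∫ x in cell ε k, H x := by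
    rw [← setIntegral_univ, ← cell_union ε]
    exact integral_iUnion (cell_meas ε) (cell_disj ε) hIntH.integrableOn
  rw [hdec1, hdec2]
  rw [← tsum_mul_left]
  refine tsum_congr fun k => ?_
  -- per-cell identity
  have hHconst : ∀ x ∈ cell ε k, H x = H (fun i => ε * (k i : ℝ)) := by
    intro x hx
    rw [hHc x]
    congr 1
    funext i
    rw [hx i]
  have e1 : ∫ x in cell ε k, H x * G (fun i => x i / ε)
      = H (fun i => ε * (k i : ℝ)) * ∫ x in cell ε k, G (fun i => x i / ε) := by
    rw [← integral_const_mul]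
    refine setIntegral_congr_fun (cell_meas ε k) fun x hx => ?_
    rw [hHconst x hx]
  have e2 : ∫ x in cell ε k, H x = H (fun i => ε * (k i : ℝ)) * (ε * ε) := by
    have : ∫ x in cell ε k, H x = ∫ _x in cell ε k, H (fun i => ε * (k i : ℝ)) :=
      setIntegral_congr_fun (cell_meas ε k) fun x hx => hHconst x hx
    rw [this, setIntegral_const, measureReal_def, cell_vol ε hε, smul_eq_mul,
      ENNReal.toReal_ofReal (by positivity), mul_comm]
  rw [e1, e2, cell_scale ε hε G hGper k]
  ring

lemma per_single (g : (Fin 2 → ℝ) → ℝ)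
    (hgper : ∀ (y : Fin 2 → ℝ) (i : Fin 2), g (y + Pi.single i 1) = g y) :
    ∀ (i : Fin 2) (n : ℤ) (y : Fin 2 → ℝ), g (y + Pi.single i (n : ℝ)) = g y := by
  intro i n
  induction n using Int.induction_on with
  | zero => intro y; simp
  | succ n ih =>
      intro y
      have h1 : (Pi.single i ((n + 1 : ℤ) : ℝ) : Fin 2 → ℝ)
          = Pi.single i ((n : ℤ) : ℝ) + Pi.single i 1 := by
        push_cast
        rw [← Pi.single_add]
      rw [h1, ← add_assoc, hgper, ih]
  | pred n ih =>
      intro y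
      have h1 : (Pi.single i ((-n : ℤ) : ℝ) : Fin 2 → ℝ)
          = Pi.single i ((-n - 1 : ℤ) : ℝ) + Pi.single i 1 := by
        push_cast
        rw [← Pi.single_add]
        ring_nf
      have := hgper (y + Pi.single i ((-n - 1 : ℤ) : ℝ)) i
      rw [add_assoc, ← h1] at this
      rw [← ih y, ← this]

lemma per_int (g : (Fin 2 → ℝ) → ℝ)
    (hgper : ∀ (y : Fin 2 → ℝ) (i : Fin 2), g (y + Pi.single i 1) = g y) :
    ∀ (y : Fin 2 → ℝ) (k : Fin 2 → ℤ), g (y + fun i => (k i : ℝ)) = g y := by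
  intro y k
  have hsplit : (fun i : Fin 2 => (k i : ℝ))
      = Pi.single 0 ((k 0 : ℝ)) + Pi.single 1 ((k 1 : ℝ)) := by
    funext j
    fin_cases j <;> simp [Pi.single_apply]
  rw [hsplit, ← add_assoc]
  rw [per_single g hgper 1 (k 1), per_single g hgper 0 (k 0)]

lemma g_bounded (g : (Fin 2 → ℝ) → ℝ) (hg : Continuous g)
    (hgper : ∀ (y : Fin 2 → ℝ) (i : Fin 2), g (y + Pi.single i 1) = g y) :
    ∃ M : ℝ, 0 ≤ M ∧ ∀ y, |g y| ≤ M := by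
  obtain ⟨M, hM⟩ := (isCompact_pi_infinite fun _ : Fin 2 => isCompact_Icc (a := (0:ℝ)) (b := 1)).exists_bound_of_continuousOn hg.continuousOn
  refine ⟨max M 0, le_max_right _ _, fun y => ?_⟩
  have hy : g y = g (fun i => Int.fract (y i)) := by
    have : y = (fun i => Int.fract (y i)) + fun i => ((⌊y i⌋ : ℤ) : ℝ) := by
      funext i
      simp only [Pi.add_apply, Int.fract]
      ring
    conv_lhs => rw [this]
    rw [per_int g hgper]
  rw [hy]
  refine le_trans ?_ (le_max_left M 0)
  have := hM (fun i => Int.fract (y i)) ?_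
  · rwa [Real.norm_eq_abs] at this
  · intro i
    exact ⟨(Int.fract_nonneg _), (Int.fract_lt_one _).le⟩

lemma intS_aux {S : Set (Fin 2 → ℝ)} (hfin : volume S < ⊤) {F : (Fin 2 → ℝ) → ℝ}
    (hm : Measurable F) (M : ℝ) (hb : ∀ x, |F x| ≤ M) :
    Integrable F (volume.restrict S) := by
  refine Integrable.mono' (g := fun _ => M) ?_ hm.aestronglyMeasurable
    (Filter.Eventually.of_forall fun x => by rw [Real.norm_eq_abs]; exact hb x)
  rw [integrable_const_iff]
  right
  exact ⟨by rwa [Measure.restrict_apply_univ]⟩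

lemma clm_sum (L : (Fin 2 → ℝ) →L[ℝ] ℝ) (v : Fin 2 → ℝ) :
    L v = ∑ i, v i * L (Pi.single i 1) := by
  have h : v = ∑ i, v i • (Pi.single i (1:ℝ) : Fin 2 → ℝ) := by
    funext j
    simp [Finset.sum_apply, Pi.single_apply]
  conv_lhs => rw [h]
  rw [map_sum]
  simp [smul_eq_mul]

lemma uc_fderiv (ψ : (Fin 2 → ℝ) → ℝ) (hψ : ContDiff ℝ (⊤ : ℕ∞) ψ)
    (hψsupp : HasCompactSupport ψ) : UniformContinuous (fderiv ℝ ψ) :=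
  (hψ.continuous_fderiv (by simp)).uniformContinuous_of_tendsto_cocompact
    (hψsupp.fderiv ℝ).is_zero_at_infty

def xiF (e : ℝ) : (Fin 2 → ℝ) → (Fin 2 → ℝ) := fun x j => e * (⌊x j / e⌋ : ℝ)

lemma xi_close (e : ℝ) (he : 0 < e) (x : Fin 2 → ℝ) (i : Fin 2) :
    0 ≤ x i - xiF e x i ∧ x i - xiF e x i < e := by
  have h1 : (⌊x i / e⌋ : ℝ) ≤ x i / e := Int.floor_le _
  have h2 : x i / e < ⌊x i / e⌋ + 1 := Int.lt_floor_add_one _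
  have h3 : e * (⌊x i / e⌋ : ℝ) ≤ x i := by
    calc e * (⌊x i / e⌋ : ℝ) ≤ e * (x i / e) := by nlinarith
      _ = x i := by field_simp
  have h4 : x i < e * (⌊x i / e⌋ : ℝ) + e := by
    have hmul := mul_lt_mul_of_pos_left h2 he
    have hxe : e * (x i / e) = x i := by field_simp
    rw [hxe] at hmul
    nlinarith
  constructor
  · simp only [xiF]; linarith
  · simp only [xiF]; linarith

lemma xi_floor (e : ℝ) (he : 0 < e) (x : Fin 2 → ℝ) (j : Fin 2) :
    ⌊xiF e x j / e⌋ = ⌊x j / e⌋ := by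
  simp only [xiF]
  rw [mul_div_cancel_left₀ _ (ne_of_gt he), Int.floor_intCast]

lemma xi_idem (e : ℝ) (he : 0 < e) (x : Fin 2 → ℝ) : xiF e (xiF e x) = xiF e x := by
  funext j
  show e * (⌊xiF e x j / e⌋ : ℝ) = xiF e x j
  rw [xi_floor e he x j]
  rfl

lemma xi_meas (e : ℝ) : Measurable (xiF e) := meas_xi e

lemma rem_bound (ψ : (Fin 2 → ℝ) → ℝ) (hψ : ContDiff ℝ (⊤ : ℕ∞) ψ)
    (e : ℝ) (he : 0 < e) (η' : ℝ) (hη' : 0 ≤ η') (δ : ℝ) (heδ : e < δ)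
    (hδ : ∀ a b : Fin 2 → ℝ, dist a b < δ → ‖fderiv ℝ ψ a - fderiv ℝ ψ b‖ ≤ η')
    (x : Fin 2 → ℝ) :
    |ψ x - ψ (xiF e x) - ∑ i, (x i - xiF e x i) * fderiv ℝ ψ (xiF e x) (Pi.single i 1)|
      ≤ η' * e := by
  set ξ0 : Fin 2 → ℝ := xiF e x with hξ0
  have hsum : ∑ i, (x i - xiF e x i) * fderiv ℝ ψ (xiF e x) (Pi.single i 1)
      = fderiv ℝ ψ ξ0 (x - ξ0) := by
    rw [clm_sum (fderiv ℝ ψ ξ0) (x - ξ0)]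
    refine Finset.sum_congr rfl fun i _ => ?_
    rw [Pi.sub_apply]
  rw [hsum]
  -- mean value on the closed ball
  set s : Set (Fin 2 → ℝ) := Metric.closedBall ξ0 e with hs
  have hxmem : x ∈ s := by
    rw [hs, Metric.mem_closedBall]
    rw [dist_pi_le_iff he.le]
    intro i
    have := xi_close e he x i
    rw [Real.dist_eq, abs_of_nonneg this.1]
    exact this.2.le
  have hξmem : ξ0 ∈ s := Metric.mem_closedBall_self he.le
  have hder : ∀ z ∈ s, HasFDerivWithinAt (fun z => ψ z - fderiv ℝ ψ ξ0 z)
      (fderiv ℝ ψ z - fderiv ℝ ψ ξ0) s z := fun z _ =>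
    (((hψ.differentiable (by simp) z).hasFDerivAt).sub ((fderiv ℝ ψ ξ0).hasFDerivAt)).hasFDerivWithinAt
  have hbd : ∀ z ∈ s, ‖fderiv ℝ ψ z - fderiv ℝ ψ ξ0‖ ≤ η' := by
    intro z hz
    refine hδ z ξ0 ?_
    rw [hs, Metric.mem_closedBall] at hz
    exact lt_of_le_of_lt hz heδ
  have := Convex.norm_image_sub_le_of_norm_hasFDerivWithin_le hder hbd
    (convex_closedBall ξ0 e) hξmem hxmem
  have heq : (fun z => ψ z - fderiv ℝ ψ ξ0 z) x - (fun z => ψ z - fderiv ℝ ψ ξ0 z) ξ0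
      = ψ x - ψ ξ0 - fderiv ℝ ψ ξ0 (x - ξ0) := by
    simp only [map_sub]
    ring
  rw [heq] at this
  rw [Real.norm_eq_abs] at this
  refine le_trans this ?_
  refine mul_le_mul_of_nonneg_left ?_ hη'
  rw [← dist_eq_norm]
  rw [Metric.mem_closedBall] at hxmem
  exact hxmem

lemma fract_meas (e : ℝ) (i : Fin 2) :
    Measurable fun x : Fin 2 → ℝ => Int.fract (x i / e) :=
  Measurable.fract (by fun_prop : Measurable fun x : Fin 2 → ℝ => x i / e)

lemma decomposition (S : Set (Fin 2 → ℝ)) (hSm : MeasurableSet S) (hSb : Bornology.IsBounded S)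
    (g : (Fin 2 → ℝ) → ℝ) (hgm : Measurable g) (Mg : ℝ) (hMg : ∀ y, |g y| ≤ Mg)
    (hgper : ∀ (y : Fin 2 → ℝ) (k : Fin 2 → ℤ), g (y + fun i => (k i : ℝ)) = g y)
    (hgmean : (∫ y in Ycube, g y) = 0)
    (ψ : (Fin 2 → ℝ) → ℝ) (hψ : ContDiff ℝ (⊤ : ℕ∞) ψ) (hψsupp : HasCompactSupport ψ)
    (Mψ : ℝ) (hMψ : ∀ x, |ψ x| ≤ Mψ) (MD : ℝ) (hMD : ∀ x, ‖fderiv ℝ ψ x‖ ≤ MD)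
    (e : ℝ) (he : 0 < e)
    (F : (Fin 2 → ℝ) → ℝ) (hFm : Measurable F) (C : ℝ) (hFb : ∀ x, |F x| ≤ C)
    (hFc : ∀ x, F x = F (xiF e x))
    (δ₀ : ℝ) (hδ₀pos : 0 < δ₀) (hδ₀ : Metric.thickening δ₀ (tsupport ψ) ⊆ S) (heδ₀ : e < δ₀) :
    (1/e) * (∫ x in S, F x * ψ x * g (fun i => x i / e))
      = (1/e) * (∫ x in S,
          F x * (ψ x - ψ (xiF e x)
            - ∑ i, (x i - xiF e x i) * fderiv ℝ ψ (xiF e x) (Pi.single i 1))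
          * g (fun i => x i / e))
        + ∑ i, (∫ y in Ycube, g y * y i)
            * ∫ x in S, F x * fderiv ℝ ψ (xiF e x) (Pi.single i 1) := by
  have hvol : volume S < ⊤ := hSb.measure_lt_top
  have hC0 : 0 ≤ C := le_trans (abs_nonneg _) (hFb 0)
  have hMg0 : 0 ≤ Mg := le_trans (abs_nonneg _) (hMg 0)
  have hMψ0 : 0 ≤ Mψ := le_trans (abs_nonneg _) (hMψ 0)
  have hMD0 : 0 ≤ MD := le_trans (norm_nonneg _) (hMD 0)
  have hψc : Continuous ψ := hψ.continuous
  have hDc : Continuous (fderiv ℝ ψ) := hψ.continuous_fderiv (by simp)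
  have hφc : ∀ i : Fin 2, Continuous fun x => fderiv ℝ ψ x (Pi.single i (1:ℝ)) := fun i =>
    ((ContinuousLinearMap.apply ℝ ℝ ((Pi.single i (1:ℝ)) : Fin 2 → ℝ)).continuous).comp hDc
  have hφb : ∀ (i : Fin 2) (x : Fin 2 → ℝ), |fderiv ℝ ψ x (Pi.single i 1)| ≤ MD := by
    intro i x
    rw [← Real.norm_eq_abs]
    calc ‖fderiv ℝ ψ x (Pi.single i 1)‖ ≤ ‖fderiv ℝ ψ x‖ * ‖(Pi.single i (1:ℝ) : Fin 2 → ℝ)‖ :=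
          (fderiv ℝ ψ x).le_opNorm _
      _ ≤ MD := by
          have : ‖(Pi.single i (1:ℝ) : Fin 2 → ℝ)‖ = 1 := by simp [Pi.norm_single]
          rw [this, mul_one]
          exact hMD x
  have hgdivm : Measurable fun x : Fin 2 → ℝ => g (fun i => x i / e) := hgm.comp (meas_div e)
  have hψξm : Measurable fun x => ψ (xiF e x) := hψc.measurable.comp (xi_meas e)
  have hφξm : ∀ i : Fin 2, Measurable fun x => fderiv ℝ ψ (xiF e x) (Pi.single i (1:ℝ)) :=
    fun i => (hφc i).measurable.comp (xi_meas e)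
  -- remainder function and its properties
  set REM : (Fin 2 → ℝ) → ℝ := fun x => ψ x - ψ (xiF e x)
      - ∑ i, (x i - xiF e x i) * fderiv ℝ ψ (xiF e x) (Pi.single i 1) with hREM
  have hREMm : Measurable REM := by
    refine (hψc.measurable.sub hψξm).sub ?_
    refine Finset.measurable_sum _ fun i _ => ?_
    exact ((measurable_pi_apply i).sub ((measurable_pi_apply i).comp (xi_meas e))).mul (hφξm i)
  have hREMb : ∀ x, |REM x| ≤ Mψ + Mψ + (e * MD + e * MD) := by
    intro x
    have h1 : |ψ x - ψ (xiF e x)| ≤ Mψ + Mψ := (abs_sub _ _).trans (add_le_add (hMψ x) (hMψ _))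
    have h2 : ∀ i : Fin 2, |(x i - xiF e x i) * fderiv ℝ ψ (xiF e x) (Pi.single i 1)| ≤ e * MD := by
      intro i
      rw [abs_mul]
      have hcl := xi_close e he x i
      refine mul_le_mul ?_ (hφb i _) (abs_nonneg _) he.le
      rw [abs_of_nonneg hcl.1]
      exact hcl.2.le
    have h3 : |∑ i : Fin 2, (x i - xiF e x i) * fderiv ℝ ψ (xiF e x) (Pi.single i 1)|
        ≤ e * MD + e * MD := by
      rw [Fin.sum_univ_two]
      exact (abs_add_le _ _).trans (add_le_add (h2 0) (h2 1))
    calc |REM x| ≤ |ψ x - ψ (xiF e x)|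
          + |∑ i : Fin 2, (x i - xiF e x i) * fderiv ℝ ψ (xiF e x) (Pi.single i 1)| := abs_sub _ _
      _ ≤ Mψ + Mψ + (e * MD + e * MD) := add_le_add h1 h3
  -- integrability of the three pieces
  have hI1 : Integrable (fun x => F x * REM x * g (fun i => x i / e)) (volume.restrict S) := by
    refine intS_aux hvol ((hFm.mul hREMm).mul hgdivm) (C * (Mψ + Mψ + (e * MD + e * MD)) * Mg)
      fun x => ?_
    rw [abs_mul, abs_mul]
    refine mul_le_mul (mul_le_mul (hFb x) (hREMb x) (abs_nonneg _) hC0) (hMg _) (abs_nonneg _) ?_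
    positivity
  have hI2 : Integrable (fun x => (F x * ψ (xiF e x)) * g (fun i => x i / e))
      (volume.restrict S) := by
    refine intS_aux hvol ((hFm.mul hψξm).mul hgdivm) (C * Mψ * Mg) fun x => ?_
    rw [abs_mul, abs_mul]
    refine mul_le_mul (mul_le_mul (hFb x) (hMψ _) (abs_nonneg _) hC0) (hMg _) (abs_nonneg _) ?_
    positivity
  have hI3 : ∀ i : Fin 2, Integrable (fun x => e * ((F x * fderiv ℝ ψ (xiF e x) (Pi.single i 1))
      * (g (fun j => x j / e) * Int.fract (x i / e)))) (volume.restrict S) := by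
    intro i
    refine intS_aux hvol (measurable_const.mul (((hFm.mul (hφξm i))).mul
      (hgdivm.mul (fract_meas e i)))) (e * (C * MD * (Mg * 1))) fun x => ?_
    rw [abs_mul, abs_mul, abs_mul, abs_of_pos he]
    refine mul_le_mul_of_nonneg_left ?_ he.le
    refine mul_le_mul (mul_le_mul (hFb x) (hφb i _) (abs_nonneg _) hC0) ?_ (abs_nonneg _) ?_
    · rw [abs_mul]
      refine mul_le_mul (hMg _) ?_ (abs_nonneg _) hMg0
      rw [abs_of_nonneg (Int.fract_nonneg _)]
      exact (Int.fract_lt_one _).le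
    · positivity
  -- pointwise identity
  have hpt : ∀ x : Fin 2 → ℝ, F x * ψ x * g (fun i => x i / e)
      = F x * REM x * g (fun i => x i / e)
        + ((F x * ψ (xiF e x)) * g (fun i => x i / e)
        + ∑ i : Fin 2, e * ((F x * fderiv ℝ ψ (xiF e x) (Pi.single i 1))
            * (g (fun j => x j / e) * Int.fract (x i / e)))) := by
    intro x
    have hfr : ∀ i : Fin 2, e * Int.fract (x i / e) = x i - xiF e x i := by
      intro i
      rw [Int.fract]
      have : xiF e x i = e * (⌊x i / e⌋ : ℝ) := rfl
      rw [this]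
      field_simp
    rw [hREM]
    simp only [Fin.sum_univ_two]
    simp only [show ∀ a b : ℝ, e * ((F x * a) * (g (fun j => x j / e) * b)) =
      F x * (e * b * a) * g (fun j => x j / e) from fun a b => by ring]
    rw [hfr 0, hfr 1]
    ring
  -- split the integral
  have hsplit : ∫ x in S, F x * ψ x * g (fun i => x i / e)
      = (∫ x in S, F x * REM x * g (fun i => x i / e))
        + ((∫ x in S, (F x * ψ (xiF e x)) * g (fun i => x i / e))
        + ∑ i : Fin 2, ∫ x in S, e * ((F x * fderiv ℝ ψ (xiF e x) (Pi.single i 1))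
            * (g (fun j => x j / e) * Int.fract (x i / e)))) := by
    have hI3sum : Integrable (fun x => ∑ i : Fin 2,
        e * ((F x * fderiv ℝ ψ (xiF e x) (Pi.single i 1))
          * (g (fun j => x j / e) * Int.fract (x i / e)))) (volume.restrict S) :=
      integrable_finset_sum _ fun i _ => hI3 i
    calc ∫ x in S, F x * ψ x * g (fun i => x i / e)
        = ∫ x in S, (F x * REM x * g (fun i => x i / e)
          + ((F x * ψ (xiF e x)) * g (fun i => x i / e)
          + ∑ i : Fin 2, e * ((F x * fderiv ℝ ψ (xiF e x) (Pi.single i 1))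
              * (g (fun j => x j / e) * Int.fract (x i / e))))) := by
            exact integral_congr_ae (Filter.Eventually.of_forall hpt)
      _ = (∫ x in S, F x * REM x * g (fun i => x i / e))
          + ∫ x in S, ((F x * ψ (xiF e x)) * g (fun i => x i / e)
          + ∑ i : Fin 2, e * ((F x * fderiv ℝ ψ (xiF e x) (Pi.single i 1))
              * (g (fun j => x j / e) * Int.fract (x i / e)))) :=
            integral_add hI1 (hI2.add hI3sum)
      _ = (∫ x in S, F x * REM x * g (fun i => x i / e))
          + ((∫ x in S, (F x * ψ (xiF e x)) * g (fun i => x i / e))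
          + ∫ x in S, ∑ i : Fin 2, e * ((F x * fderiv ℝ ψ (xiF e x) (Pi.single i 1))
              * (g (fun j => x j / e) * Int.fract (x i / e)))) := by
            rw [integral_add hI2 hI3sum]
      _ = (∫ x in S, F x * REM x * g (fun i => x i / e))
          + ((∫ x in S, (F x * ψ (xiF e x)) * g (fun i => x i / e))
          + ∑ i : Fin 2, ∫ x in S, e * ((F x * fderiv ℝ ψ (xiF e x) (Pi.single i 1))
              * (g (fun j => x j / e) * Int.fract (x i / e)))) := by
            rw [integral_finset_sum _ fun i _ => hI3 i]
  -- support facts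
  have hclose' : ∀ (x : Fin 2 → ℝ) (i : Fin 2), |x i - xiF e x i| < e := by
    intro x i
    have := xi_close e he x i
    rw [abs_of_nonneg this.1]
    exact this.2
  have hcellS : ∀ x y : Fin 2 → ℝ, xiF e x ∈ tsupport ψ →
      (∀ i, ⌊y i / e⌋ = ⌊x i / e⌋) → y ∈ S := by
    intro x y hmem hfl
    refine hδ₀ ?_
    refine Metric.ball_subset_thickening hmem δ₀ ?_
    rw [Metric.mem_ball, dist_pi_lt_iff hδ₀pos]
    intro i
    have hxy : xiF e x i = xiF e y i := by
      show e * (⌊x i / e⌋ : ℝ) = e * (⌊y i / e⌋ : ℝ)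
      rw [hfl i]
    rw [Real.dist_eq, hxy]
    calc |y i - xiF e y i| < e := hclose' y i
      _ < δ₀ := heδ₀
  -- the zero term
  have hkey2 : ∫ x in S, (F x * ψ (xiF e x)) * g (fun i => x i / e) = 0 := by
    have h := key_cell e he g (fun x => F x * ψ (xiF e x)) hgm Mg hMg hgper
      (hFm.mul hψξm) (C * Mψ)
      (fun x => by
        rw [abs_mul]
        exact mul_le_mul (hFb x) (hMψ _) (abs_nonneg _) hC0)
      (fun x => by
        show F x * ψ (xiF e x) = F (xiF e x) * ψ (xiF e (xiF e x))
        rw [xi_idem e he, ← hFc x])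
      S hSm hSb
      (fun x y hne hfl => hcellS x y (subset_tsupport ψ (right_ne_zero_of_mul hne)) hfl)
    rw [hgmean, zero_mul] at h
    exact h
  -- fract on Ycube
  have hfractY : ∀ i : Fin 2, (∫ y in Ycube, g y * Int.fract (y i)) = ∫ y in Ycube, g y * y i := by
    intro i
    refine setIntegral_congr_fun Ycube_meas fun y hy => ?_
    have hyi : y i ∈ Set.Ico (0:ℝ) 1 := hy i (Set.mem_univ i)
    rw [Int.fract_eq_self.2 ⟨hyi.1, hyi.2⟩]
  -- the main terms
  have hkey3 : ∀ i : Fin 2, ∫ x in S, e * ((F x * fderiv ℝ ψ (xiF e x) (Pi.single i 1))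
      * (g (fun j => x j / e) * Int.fract (x i / e)))
      = e * ((∫ y in Ycube, g y * y i)
          * ∫ x in S, F x * fderiv ℝ ψ (xiF e x) (Pi.single i 1)) := by
    intro i
    rw [integral_const_mul]
    congr 1
    have h := key_cell e he (fun y => g y * Int.fract (y i))
      (fun x => F x * fderiv ℝ ψ (xiF e x) (Pi.single i 1))
      (hgm.mul (Measurable.fract (measurable_pi_apply i))) (Mg * 1)
      (fun y => by
        rw [abs_mul]
        refine mul_le_mul (hMg y) ?_ (abs_nonneg _) hMg0
        rw [abs_of_nonneg (Int.fract_nonneg _)]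
        exact (Int.fract_lt_one _).le)
      (fun y k => by
        show g (y + fun i => (k i : ℝ)) * Int.fract ((y + fun i => (k i : ℝ)) i)
          = g y * Int.fract (y i)
        simp only [Pi.add_apply]
        rw [hgper y k, Int.fract_add_intCast])
      (hFm.mul (hφξm i)) (C * MD)
      (fun x => by
        rw [abs_mul]
        exact mul_le_mul (hFb x) (hφb i _) (abs_nonneg _) hC0)
      (fun x => by
        show F x * fderiv ℝ ψ (xiF e x) (Pi.single i 1)
          = F (xiF e x) * fderiv ℝ ψ (xiF e (xiF e x)) (Pi.single i 1)
        rw [xi_idem e he, ← hFc x])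
      S hSm hSb
      (fun x y hne hfl => by
        have hDne : fderiv ℝ ψ (xiF e x) ≠ 0 := by
          intro hzero
          have := right_ne_zero_of_mul hne
          rw [hzero] at this
          simp at this
        exact hcellS x y (support_fderiv_subset ℝ hDne) hfl)
    rw [← hfractY i]
    exact h
  have hsum3 : ∑ i : Fin 2, ∫ x in S, e * ((F x * fderiv ℝ ψ (xiF e x) (Pi.single i 1))
      * (g (fun j => x j / e) * Int.fract (x i / e)))
      = ∑ i : Fin 2, e * ((∫ y in Ycube, g y * y i)
          * ∫ x in S, F x * fderiv ℝ ψ (xiF e x) (Pi.single i 1)) :=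
    Finset.sum_congr rfl fun i _ => hkey3 i
  rw [hsplit, hkey2, hsum3]
  simp only [hREM, Fin.sum_univ_two]
  field_simp
  ring

lemma clm_single_bound (ψ : (Fin 2 → ℝ) → ℝ) (MD : ℝ)
    (hMD : ∀ x, ‖fderiv ℝ ψ x‖ ≤ MD) (i : Fin 2) (x : Fin 2 → ℝ) :
    |fderiv ℝ ψ x (Pi.single i 1)| ≤ MD := by
  rw [← Real.norm_eq_abs]
  calc ‖fderiv ℝ ψ x (Pi.single i 1)‖
      ≤ ‖fderiv ℝ ψ x‖ * ‖(Pi.single i (1:ℝ) : Fin 2 → ℝ)‖ := (fderiv ℝ ψ x).le_opNorm _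
    _ ≤ MD := by
        have h1 : ‖(Pi.single i (1:ℝ) : Fin 2 → ℝ)‖ = 1 := by simp [Pi.norm_single]
        rw [h1, mul_one]
        exact hMD x

/-- Renormalized limit for piecewise constant sequences: if f^h is constant on each cube of
the ε(h)-lattice, uniformly bounded and f^h ⇀* f⁰ weakly-* in L^∞(S), g is continuous,
Y-periodic with zero mean, and ψ ∈ C_c^∞(S), then
(1/ε(h)) ∫_S f^h ψ g(·/ε(h)) → (∫_S f⁰ ∇ψ) · (∫_Y g(y) y dy). -/
theorem stmt8 (S : Set (Fin 2 → ℝ)) (hS : IsOpen S) (hSb : Bornology.IsBounded S)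
    (g : (Fin 2 → ℝ) → ℝ) (hg : Continuous g)
    (hgper : ∀ (y : Fin 2 → ℝ) (i : Fin 2), g (y + Pi.single i 1) = g y)
    (hgmean : (∫ y in Ycube, g y) = 0)
    (ψ : (Fin 2 → ℝ) → ℝ) (hψ : ContDiff ℝ (⊤ : ℕ∞) ψ) (hψsupp : HasCompactSupport ψ)
    (hψS : tsupport ψ ⊆ S)
    (ε : ℝ → ℝ) (hεpos : ∀ h > (0:ℝ), 0 < ε h) (hε : Tendsto ε (𝓝[>] (0:ℝ)) (𝓝 0))
    (f : ℝ → (Fin 2 → ℝ) → ℝ) (f0 : (Fin 2 → ℝ) → ℝ)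
    (C : ℝ) (hfb : ∀ h > (0:ℝ), ∀ x, |f h x| ≤ C)
    (hfm : ∀ h > (0:ℝ), Measurable (f h))
    (hf0b : ∀ x, |f0 x| ≤ C) (hf0m : Measurable f0)
    (hpc : ∀ h > (0:ℝ), ∀ x : Fin 2 → ℝ,
      f h x = f h (fun i => ε h * (⌊x i / ε h⌋ : ℝ)))
    (hws : ∀ φ : (Fin 2 → ℝ) → ℝ, Integrable φ (volume.restrict S) →
      Tendsto (fun h => ∫ x in S, f h x * φ x) (𝓝[>] (0:ℝ))
        (𝓝 (∫ x in S, f0 x * φ x))) :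
    Tendsto (fun h => (1 / ε h) * ∫ x in S, f h x * ψ x * g (fun i => x i / ε h))
      (𝓝[>] (0:ℝ))
      (𝓝 (∑ i : Fin 2,
        (∫ x in S, f0 x * fderiv ℝ ψ x (Pi.single i 1)) * ∫ y in Ycube, g y * y i)) := by
  have hvol : volume S < ⊤ := hSb.measure_lt_top
  have hSm : MeasurableSet S := hS.measurableSet
  have hC0 : 0 ≤ C := le_trans (abs_nonneg _) (hfb 1 one_pos 0)
  obtain ⟨Mg, hMg0, hMg⟩ := g_bounded g hg hgper
  have hgm : Measurable g := hg.measurable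
  have hgperint := per_int g hgper
  obtain ⟨Mψ, hMψ'⟩ := hψ.continuous.bounded_above_of_compact_support hψsupp
  have hMψ : ∀ x, |ψ x| ≤ Mψ := fun x => by rw [← Real.norm_eq_abs]; exact hMψ' x
  obtain ⟨MD, hMD⟩ :=
    (hψ.continuous_fderiv (by simp)).bounded_above_of_compact_support (hψsupp.fderiv ℝ)
  obtain ⟨δ₀, hδ₀pos, hδ₀⟩ := hψsupp.exists_thickening_subset_open hS hψS
  have hUC := uc_fderiv ψ hψ hψsupp
  have hφc : ∀ i : Fin 2, Continuous fun x => fderiv ℝ ψ x (Pi.single i (1:ℝ)) := fun i =>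
    ((ContinuousLinearMap.apply ℝ ℝ ((Pi.single i (1:ℝ)) : Fin 2 → ℝ)).continuous).comp
      (hψ.continuous_fderiv (by simp))
  have hφb := clm_single_bound ψ MD hMD
  -- limits of the coefficient integrals
  have hPlim : ∀ i : Fin 2,
      Tendsto (fun h => ∫ x in S, f h x * fderiv ℝ ψ (xiF (ε h) x) (Pi.single i 1))
        (𝓝[>] (0:ℝ)) (𝓝 (∫ x in S, f0 x * fderiv ℝ ψ x (Pi.single i 1))) := by
    intro i
    have hQ := hws (fun x => fderiv ℝ ψ x (Pi.single i 1))
      (intS_aux hvol (hφc i).measurable MD (hφb i))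
    have hR : Tendsto (fun h => ∫ x in S, f h x * (fderiv ℝ ψ (xiF (ε h) x) (Pi.single i 1)
        - fderiv ℝ ψ x (Pi.single i 1))) (𝓝[>] (0:ℝ)) (𝓝 0) := by
      rw [NormedAddCommGroup.tendsto_nhds_zero]
      intro η hη
      have hB : (0:ℝ) < C * (volume S).toReal + 1 := by positivity
      have hη'pos : 0 < η / (C * (volume S).toReal + 1) := div_pos hη hB
      obtain ⟨δ, hδpos, hδ⟩ := Metric.uniformContinuous_iff.1 hUC _ hη'pos
      filter_upwards [eventually_mem_nhdsWithin, hε.eventually_lt_const hδpos] with h hh hhδ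
      have hh0 : (0:ℝ) < h := hh
      have he : 0 < ε h := hεpos h hh0
      have hbound : ∀ x ∈ S, ‖f h x * (fderiv ℝ ψ (xiF (ε h) x) (Pi.single i 1)
          - fderiv ℝ ψ x (Pi.single i 1))‖ ≤ C * (η / (C * (volume S).toReal + 1)) := by
        intro x _
        rw [Real.norm_eq_abs, abs_mul]
        refine mul_le_mul (hfb h hh0 x) ?_ (abs_nonneg _) hC0
        have hdist : dist (xiF (ε h) x) x < δ := by
          rw [dist_pi_lt_iff hδpos]
          intro j
          have hcl := xi_close (ε h) he x j
          rw [Real.dist_eq, abs_sub_comm, abs_of_nonneg hcl.1]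
          exact lt_trans hcl.2 hhδ
        have heval : |fderiv ℝ ψ (xiF (ε h) x) (Pi.single i 1) - fderiv ℝ ψ x (Pi.single i 1)|
            ≤ ‖fderiv ℝ ψ (xiF (ε h) x) - fderiv ℝ ψ x‖ := by
          rw [← ContinuousLinearMap.sub_apply, ← Real.norm_eq_abs]
          calc ‖(fderiv ℝ ψ (xiF (ε h) x) - fderiv ℝ ψ x) (Pi.single i 1)‖
              ≤ ‖fderiv ℝ ψ (xiF (ε h) x) - fderiv ℝ ψ x‖
                * ‖(Pi.single i (1:ℝ) : Fin 2 → ℝ)‖ := ContinuousLinearMap.le_opNorm _ _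
            _ = ‖fderiv ℝ ψ (xiF (ε h) x) - fderiv ℝ ψ x‖ := by simp [Pi.norm_single]
        refine le_trans heval ?_
        rw [← dist_eq_norm]
        exact (hδ hdist).le
      calc ‖∫ x in S, f h x * (fderiv ℝ ψ (xiF (ε h) x) (Pi.single i 1)
              - fderiv ℝ ψ x (Pi.single i 1))‖
          ≤ (C * (η / (C * (volume S).toReal + 1))) * (volume S).toReal :=
            norm_setIntegral_le_of_norm_le_const hvol hbound
        _ = η * ((C * (volume S).toReal) / (C * (volume S).toReal + 1)) := by ring
        _ < η * 1 := by
            refine mul_lt_mul_of_pos_left ?_ hη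
            rw [div_lt_one hB]
            linarith
        _ = η := mul_one η
    have heq : ∀ᶠ h in 𝓝[>] (0:ℝ), (∫ x in S, f h x * fderiv ℝ ψ x (Pi.single i 1))
        + (∫ x in S, f h x * (fderiv ℝ ψ (xiF (ε h) x) (Pi.single i 1)
            - fderiv ℝ ψ x (Pi.single i 1)))
        = ∫ x in S, f h x * fderiv ℝ ψ (xiF (ε h) x) (Pi.single i 1) := by
      filter_upwards [eventually_mem_nhdsWithin] with h hh
      have hh0 : (0:ℝ) < h := hh
      have hint1 : Integrable (fun x => f h x * fderiv ℝ ψ x (Pi.single i 1))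
          (volume.restrict S) :=
        intS_aux hvol ((hfm h hh0).mul (hφc i).measurable) (C * MD) (fun x => by
          rw [abs_mul]; exact mul_le_mul (hfb h hh0 x) (hφb i x) (abs_nonneg _) hC0)
      have hint2 : Integrable (fun x => f h x * (fderiv ℝ ψ (xiF (ε h) x) (Pi.single i 1)
          - fderiv ℝ ψ x (Pi.single i 1))) (volume.restrict S) :=
        intS_aux hvol ((hfm h hh0).mul ((((hφc i).measurable.comp (xi_meas (ε h)))).sub
          (hφc i).measurable)) (C * (MD + MD)) (fun x => by
          rw [abs_mul]
          refine mul_le_mul (hfb h hh0 x) ?_ (abs_nonneg _) hC0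
          exact (abs_sub _ _).trans (add_le_add (hφb i _) (hφb i x)))
      rw [← integral_add hint1 hint2]
      refine integral_congr_ae (Filter.Eventually.of_forall fun x => ?_)
      ring
    have hcomb := hQ.add hR
    rw [add_zero] at hcomb
    exact Tendsto.congr' heq hcomb
  -- limit of the sum
  have hAlim : Tendsto (fun h => ∑ i : Fin 2, (∫ y in Ycube, g y * y i)
      * ∫ x in S, f h x * fderiv ℝ ψ (xiF (ε h) x) (Pi.single i 1)) (𝓝[>] (0:ℝ))
      (𝓝 (∑ i : Fin 2, (∫ y in Ycube, g y * y i)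
        * ∫ x in S, f0 x * fderiv ℝ ψ x (Pi.single i 1))) :=
    tendsto_finset_sum _ fun i _ => (hPlim i).const_mul _
  -- the difference goes to zero
  have hdiff : Tendsto (fun h => (1 / ε h) * (∫ x in S, f h x * ψ x * g (fun i => x i / ε h))
      - ∑ i : Fin 2, (∫ y in Ycube, g y * y i)
        * ∫ x in S, f h x * fderiv ℝ ψ (xiF (ε h) x) (Pi.single i 1))
      (𝓝[>] (0:ℝ)) (𝓝 0) := by
    rw [NormedAddCommGroup.tendsto_nhds_zero]
    intro η hη
    have hB : (0:ℝ) < C * Mg * (volume S).toReal + 1 := by positivity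
    have hη'pos : 0 < η / (C * Mg * (volume S).toReal + 1) := div_pos hη hB
    obtain ⟨δ, hδpos, hδ⟩ := Metric.uniformContinuous_iff.1 hUC _ hη'pos
    filter_upwards [eventually_mem_nhdsWithin, hε.eventually_lt_const hδpos,
      hε.eventually_lt_const hδ₀pos] with h hh hhδ hhδ₀
    have hh0 : (0:ℝ) < h := hh
    have he : 0 < ε h := hεpos h hh0
    have hfc : ∀ x, f h x = f h (xiF (ε h) x) := fun x => hpc h hh0 x
    have hdec := decomposition S hSm hSb g hgm Mg hMg hgperint hgmean ψ hψ hψsupp Mψ hMψ MD hMD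
      (ε h) he (f h) (hfm h hh0) C (hfb h hh0) hfc δ₀ hδ₀pos hδ₀ hhδ₀
    rw [hdec, add_sub_cancel_right]
    have hrem := rem_bound ψ hψ (ε h) he _ hη'pos.le δ hhδ
      (fun a b hab => by rw [← dist_eq_norm]; exact (hδ hab).le)
    have hbound : ∀ x ∈ S, ‖f h x * (ψ x - ψ (xiF (ε h) x)
        - ∑ i : Fin 2, (x i - xiF (ε h) x i) * fderiv ℝ ψ (xiF (ε h) x) (Pi.single i 1))
        * g (fun i => x i / ε h)‖
        ≤ C * ((η / (C * Mg * (volume S).toReal + 1)) * ε h) * Mg := by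
      intro x _
      rw [Real.norm_eq_abs, abs_mul, abs_mul]
      refine mul_le_mul (mul_le_mul (hfb h hh0 x) (hrem x) (abs_nonneg _) hC0) (hMg _)
        (abs_nonneg _) ?_
      positivity
    calc ‖(1 / ε h) * ∫ x in S, f h x * (ψ x - ψ (xiF (ε h) x)
            - ∑ i : Fin 2, (x i - xiF (ε h) x i) * fderiv ℝ ψ (xiF (ε h) x) (Pi.single i 1))
            * g (fun i => x i / ε h)‖
        = (1 / ε h) * ‖∫ x in S, f h x * (ψ x - ψ (xiF (ε h) x)
            - ∑ i : Fin 2, (x i - xiF (ε h) x i) * fderiv ℝ ψ (xiF (ε h) x) (Pi.single i 1))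
            * g (fun i => x i / ε h)‖ := by
          rw [norm_mul, Real.norm_eq_abs (1 / ε h), abs_of_pos (by positivity)]
      _ ≤ (1 / ε h) * ((C * ((η / (C * Mg * (volume S).toReal + 1)) * ε h) * Mg)
            * (volume S).toReal) := by
          refine mul_le_mul_of_nonneg_left ?_ (by positivity)
          exact norm_setIntegral_le_of_norm_le_const hvol hbound
      _ = η * ((C * Mg * (volume S).toReal) / (C * Mg * (volume S).toReal + 1)) := by
          field_simp
      _ < η * 1 := by
          refine mul_lt_mul_of_pos_left ?_ hη
          rw [div_lt_one hB]
          linarith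
      _ = η := mul_one η
  -- conclude
  have hfinal := hdiff.add hAlim
  rw [zero_add] at hfinal
  have hfuneq : (fun h => ((1 / ε h) * (∫ x in S, f h x * ψ x * g (fun i => x i / ε h))
      - ∑ i : Fin 2, (∫ y in Ycube, g y * y i)
        * ∫ x in S, f h x * fderiv ℝ ψ (xiF (ε h) x) (Pi.single i 1))
      + ∑ i : Fin 2, (∫ y in Ycube, g y * y i)
        * ∫ x in S, f h x * fderiv ℝ ψ (xiF (ε h) x) (Pi.single i 1))
      = fun h => (1 / ε h) * ∫ x in S, f h x * ψ x * g (fun i => x i / ε h) := by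
    funext h
    ring
  rw [hfuneq] at hfinal
  have hsumcomm : (∑ i : Fin 2, (∫ x in S, f0 x * fderiv ℝ ψ x (Pi.single i 1))
      * ∫ y in Ycube, g y * y i)
      = ∑ i : Fin 2, (∫ y in Ycube, g y * y i)
        * ∫ x in S, f0 x * fderiv ℝ ψ x (Pi.single i 1) :=
    Finset.sum_congr rfl fun i _ => mul_comm _ _
  rw [hsumcomm]
  exact hfinal

end
end
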